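/- arXiv:0802.3822 — 10 statements merged into one kernel-verified Lean document; each statement's English description precedes it below -/
import Mathlib

section
/- Let I and J be ideals (in our sense) on a countably infinite set X. If C_I^{(1)} ⊆ C_J^{(1)}, then I ⊆ J. In particular, distinct ideals (in our sense) induce distinct clones C_I. -/
/-- The set of all finitary operations on `X`: an element of arity index `n`
is an `(n+1)`-ary operation, so that all arities are `≥ 1`. -/
abbrev Ops (X : Type) : Type := Σ n : ℕ, (Fin (n + 1) → X) → X

/-- `opImage f A` is the image `f[A^n]` of the `n`-th power of `A` under the
`n`-ary operation `f`. -/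
def opImage {X : Type} (f : Ops X) (A : Set X) : Set X :=
  f.2 '' {x | ∀ i, x i ∈ A}

/-- An ideal "in our sense": closed under subsets and finite unions, contains all
finite sets, contains at least one infinite set, and does not contain `X`. -/
def IsIdealInOurSense {X : Type} (I : Set (Set X)) : Prop :=
  (∀ A ∈ I, ∀ B ⊆ A, B ∈ I) ∧
  (∀ A ∈ I, ∀ B ∈ I, A ∪ B ∈ I) ∧
  (∀ A : Set X, A.Finite → A ∈ I) ∧
  (∃ A ∈ I, A.Infinite) ∧
  (Set.univ : Set X) ∉ I

/-- The clone `C_I` induced by a collection of sets `I`: all operations mapping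
powers of `I`-sets into `I`. -/
def idealClone {X : Type} (I : Set (Set X)) : Set (Ops X) :=
  {f | ∀ A ∈ I, opImage f A ∈ I}

/-- The unary part `C_I^{(1)}` of the clone induced by `I`. -/
def unaryPart {X : Type} (I : Set (Set X)) : Set (X → X) :=
  {f | ∀ A ∈ I, f '' A ∈ I}

/-- A clone: a set of finitary operations containing all projections and closed
under composition. -/
def IsClone {X : Type} (C : Set (Ops X)) : Prop :=
  (∀ (n : ℕ) (i : Fin (n + 1)), (⟨n, fun x => x i⟩ : Ops X) ∈ C) ∧
  ∀ (n m : ℕ) (f : (Fin (n + 1) → X) → X) (g : Fin (n + 1) → (Fin (m + 1) → X) → X),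
    (⟨n, f⟩ : Ops X) ∈ C → (∀ i, (⟨m, g i⟩ : Ops X) ∈ C) →
    (⟨m, fun x => f fun i => g i x⟩ : Ops X) ∈ C

/-- The clone generated by a set of operations. -/
def cloneGen {X : Type} (F : Set (Ops X)) : Set (Ops X) :=
  ⋂₀ {C : Set (Ops X) | IsClone C ∧ F ⊆ C}

/-- A precomplete clone: a proper clone whose only proper cover is the full clone `O`. -/
def IsPrecompleteClone {X : Type} (C : Set (Ops X)) : Prop :=
  IsClone C ∧ C ≠ Set.univ ∧
  ∀ D : Set (Ops X), IsClone D → C ⊂ D → D = Set.univ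

/-- The regularization `Î` of `I`: all sets `A` such that every infinite subset
of `A` contains an infinite member of `I`. -/
def regularization {X : Type} (I : Set (Set X)) : Set (Set X) :=
  {A | ∀ B ⊆ A, B.Infinite → ∃ C ⊆ B, C.Infinite ∧ C ∈ I}


open Classical in
lemma key_sub {X : Type} [Countable X] [Infinite X]
    {I J : Set (Set X)} (hI : IsIdealInOurSense I) (hJ : IsIdealInOurSense J)
    (h : unaryPart I ⊆ unaryPart J) : I ⊆ J := by
  intro A hA
  by_cases hfin : A.Finite
  · exact hJ.2.2.1 A hfin
  · have hAinf : A.Infinite := hfin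
    obtain ⟨a₀, ha₀⟩ := hAinf.nonempty
    obtain ⟨B, hBJ, hBinf⟩ := hJ.2.2.2.1
    haveI : Infinite ↥B := hBinf.to_subtype
    haveI : Infinite ↥A := hAinf.to_subtype
    obtain ⟨e⟩ : Nonempty (↥B ≃ ↥A) := nonempty_equiv_of_countable
    set f : X → X := fun x => if h : x ∈ B then (e ⟨x, h⟩ : X) else a₀ with hf
    have hran : ∀ x, f x ∈ A := by
      intro x
      by_cases hx : x ∈ B
      · simp only [hf, dif_pos hx]; exact (e ⟨x, hx⟩).2
      · simp only [hf, dif_neg hx]; exact ha₀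
    have hfI : f ∈ unaryPart I := by
      intro C hC
      exact hI.1 A hA (f '' C) (by rintro _ ⟨x, _, rfl⟩; exact hran x)
    have himg : f '' B = A := by
      apply Set.Subset.antisymm
      · rintro _ ⟨x, _, rfl⟩; exact hran x
      · intro a ha
        refine ⟨(e.symm ⟨a, ha⟩ : X), (e.symm ⟨a, ha⟩).2, ?_⟩
        simp only [hf, dif_pos (e.symm ⟨a, ha⟩).2, Subtype.coe_eta, Equiv.apply_symm_apply]
    have := h hfI B hBJ
    rwa [himg] at this

lemma unary_mem_iff {X : Type} (I : Set (Set X)) (f : X → X) :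
    f ∈ unaryPart I ↔ (⟨0, fun x => f (x 0)⟩ : Ops X) ∈ idealClone I := by
  have himg : ∀ A : Set X, opImage (⟨0, fun x => f (x 0)⟩ : Ops X) A = f '' A := by
    intro A
    apply Set.Subset.antisymm
    · rintro _ ⟨x, hx, rfl⟩; exact ⟨x 0, hx 0, rfl⟩
    · rintro _ ⟨a, ha, rfl⟩; exact ⟨fun _ => a, fun _ => ha, rfl⟩
  constructor
  · intro hf A hA; rw [himg]; exact hf A hA
  · intro hf A hA; have := hf A hA; rwa [himg] at this

/-- If `C_I^{(1)} ⊆ C_J^{(1)}` then `I ⊆ J`; in particular distinct ideals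
(in our sense) induce distinct clones. -/
theorem stmt0 {X : Type} [Countable X] [Infinite X]
    {I J : Set (Set X)} (hI : IsIdealInOurSense I) (hJ : IsIdealInOurSense J) :
    (unaryPart I ⊆ unaryPart J → I ⊆ J) ∧
    (I ≠ J → idealClone I ≠ idealClone J) := by
  refine ⟨key_sub hI hJ, ?_⟩
  intro hne heq
  apply hne
  have hu : unaryPart I = unaryPart J := by
    ext f
    rw [unary_mem_iff, unary_mem_iff, heq]
  exact Set.Subset.antisymm (key_sub hI hJ hu.le) (key_sub hJ hI hu.ge)
end

section
/- Let I be an ideal (in our sense) on a countably infinite set X which is countably generated, i.e., there exists a sequence (G_n)_{n≥1} of members of I such that every A ∈ I is contained in the union of finitely many of the sets G_n together with a finite set. Then I is regular, i.e., I = Î. -/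
/-!
If `A ∉ I`, then `A` is not almost covered by finitely many generators, so one can pick
distinct points `b n ∈ A \ (G 0 ∪ ⋯ ∪ G (n-1))`. The infinite set `B = {b n}` meets each `G k`
in at most `k + 1` points, hence every member of `I` inside `B`, being almost covered by finitely
many `G k`, is finite: `B` witnesses `A ∉ Î`.
-/

open Set Function

theorem exists_injective_forall_mem_of_antitone {α : Type*} {S : ℕ → Set α}
    (hS : Antitone S) (hinf : ∀ n, (S n).Infinite) :
    ∃ f : ℕ → α, Injective f ∧ ∀ n, f n ∈ S n := by
  classical
  -- Choose points together with strictly increasing indices; `n ≤ k n` and antitonicity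
  -- then put the `n`-th point in `S n`.
  obtain ⟨f, hfS, hf⟩ := exists_seq_of_forall_finset_exists (fun p : ℕ × α => p.2 ∈ S p.1)
    (fun p q => p.1 < q.1 ∧ p.2 ≠ q.2) fun s _ => by
      obtain ⟨y, hy, hys⟩ := (hinf (s.sup Prod.fst + 1)).exists_notMem_finset (s.image Prod.snd)
      exact ⟨(_, y), hy, fun p hp =>
        ⟨Nat.lt_succ_of_le (s.le_sup hp), fun h => hys (Finset.mem_image.2 ⟨p, hp, h⟩)⟩⟩
  have hmono : StrictMono (Prod.fst ∘ f) := fun m n h => (hf m n h).1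
  refine ⟨Prod.snd ∘ f, fun m n h => ?_, fun n => hS (hmono.id_le n) (hfS n)⟩
  by_contra hne
  rcases Ne.lt_or_gt hne with hlt | hlt
  · exact (hf m n hlt).2 h
  · exact (hf n m hlt).2 h.symm

namespace IsIdealInOurSense

variable {X : Type} {I : Set (Set X)}

theorem subset_regularization (hI : IsIdealInOurSense I) : I ⊆ regularization I :=
  fun A hA B hBA hB => ⟨B, subset_rfl, hB, hI.1 A hA B hBA⟩

theorem biUnion_mem (hI : IsIdealInOurSense I) {ι : Type*} {G : ι → Set X} (hG : ∀ i, G i ∈ I)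
    (s : Finset ι) : ⋃ i ∈ s, G i ∈ I := by
  classical
  induction s using Finset.induction with
  | empty => simpa using hI.2.2.1 ∅ finite_empty
  | insert i s _ ih =>
    rw [Finset.set_biUnion_insert]
    exact hI.2.1 _ (hG i) _ ih

theorem mem_of_finite_diff (hI : IsIdealInOurSense I) {A B : Set X} (hB : B ∈ I)
    (hAB : (A \ B).Finite) : A ∈ I :=
  hI.1 _ (hI.2.1 _ (hI.2.2.1 _ hAB) _ hB) A (by simp)

theorem exists_infinite_subset_inter_finite (hI : IsIdealInOurSense I) {G : ℕ → Set X}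
    (hG : ∀ n, G n ∈ I) {A : Set X} (hA : A ∉ I) :
    ∃ B ⊆ A, B.Infinite ∧ ∀ k, (B ∩ G k).Finite := by
  set S : ℕ → Set X := fun n => A \ ⋃ i ∈ Finset.range n, G i
  have hS : Antitone S := fun m n hmn =>
    sdiff_subset_sdiff_right (biUnion_subset_biUnion_left (by simpa using hmn))
  have hSinf : ∀ n, (S n).Infinite := fun n hfin =>
    hA (hI.mem_of_finite_diff (hI.biUnion_mem hG _) hfin)
  obtain ⟨b, hb, hbS⟩ := exists_injective_forall_mem_of_antitone hS hSinf
  refine ⟨range b, range_subset_iff.2 fun n => (hbS n).1, infinite_range_of_injective hb,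
    fun k => ((finite_Iic k).image b).subset ?_⟩
  rintro _ ⟨⟨n, rfl⟩, hnk⟩
  refine ⟨n, mem_Iic.2 <| not_lt.1 fun hkn => (hbS n).2 ?_, rfl⟩
  exact mem_biUnion (Finset.mem_range.2 hkn) hnk

end IsIdealInOurSense

theorem finite_of_subset_of_inter_finite {X : Type} {I : Set (Set X)} {G : ℕ → Set X}
    (hgen : ∀ A ∈ I, ∃ (s : Finset ℕ) (F : Set X), F.Finite ∧ A ⊆ F ∪ ⋃ n ∈ s, G n)
    {B : Set X} (hB : ∀ k, (B ∩ G k).Finite) {C : Set X} (hCB : C ⊆ B) (hC : C ∈ I) :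
    C.Finite := by
  obtain ⟨s, F, hF, hCF⟩ := hgen C hC
  refine (hF.union (s.finite_toSet.biUnion fun k _ => hB k)).subset fun x hx => ?_
  rcases hCF hx with hxF | hxG
  · exact Or.inl hxF
  · obtain ⟨k, hk, hxk⟩ := mem_iUnion₂.1 hxG
    exact Or.inr (mem_biUnion hk ⟨hCB hx, hxk⟩)

theorem stmt1_general {X : Type}
    {I : Set (Set X)} (hI : IsIdealInOurSense I)
    (hgen : ∃ G : ℕ → Set X, (∀ n, G n ∈ I) ∧
      ∀ A ∈ I, ∃ (s : Finset ℕ) (F : Set X), F.Finite ∧ A ⊆ F ∪ ⋃ n ∈ s, G n) :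
    I = regularization I := by
  obtain ⟨G, hG, hcover⟩ := hgen
  refine hI.subset_regularization.antisymm fun A hA => ?_
  by_contra hAI
  obtain ⟨B, hBA, hBinf, hBG⟩ := hI.exists_infinite_subset_inter_finite hG hAI
  obtain ⟨C, hCB, hCinf, hCI⟩ := hA B hBA hBinf
  exact hCinf (finite_of_subset_of_inter_finite hcover hBG hCB hCI)

/-- Every countably generated ideal (in our sense) is regular. -/
theorem stmt1 {X : Type} [Countable X] [Infinite X]
    {I : Set (Set X)} (hI : IsIdealInOurSense I)
    (hgen : ∃ G : ℕ → Set X, (∀ n, G n ∈ I) ∧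
      ∀ A ∈ I, ∃ (s : Finset ℕ) (F : Set X), F.Finite ∧ A ⊆ F ∪ ⋃ n ∈ s, G n) :
    I = regularization I :=
  stmt1_general hI hgen
end

section
/- Let I and J be ideals (in our sense) on a countably infinite set X. If C_I^{(1)} ⊆ C_J^{(1)}, then J ⊆ Î. Moreover, if I is not dense (i.e., X ∉ Î), then Î is again an ideal in our sense and the full clone inclusion C_I ⊆ C_Î holds (every finitary operation mapping I-sets' powers into I also maps Î-sets' powers into Î). -/
/-- If `C_I^{(1)} ⊆ C_J^{(1)}` then `J ⊆ Î`; moreover if `I` is not dense then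
`Î` is an ideal in our sense and `C_I ⊆ C_Î`. -/
theorem stmt2 {X : Type} [Countable X] [Infinite X]
    {I J : Set (Set X)} (hI : IsIdealInOurSense I) (hJ : IsIdealInOurSense J) :
    (unaryPart I ⊆ unaryPart J → J ⊆ regularization I) ∧
    ((Set.univ : Set X) ∉ regularization I →
      IsIdealInOurSense (regularization I) ∧
      idealClone I ⊆ idealClone (regularization I)) := by
  classical
  obtain ⟨hIsub, hIun, hIfin, hIinf, hIuniv⟩ := hI
  obtain ⟨hJsub, hJun, hJfin, hJinf, hJuniv⟩ := hJ
  constructor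
  · intro hUJ A hA B hBA hBinf
    by_contra hcon
    push_neg at hcon
    -- hcon : ∀ C ⊆ B, C.Infinite → C ∉ I
    have hBcnt : Countable ↥B := Subtype.countable
    have hBinf' : Infinite ↥B := hBinf.to_subtype
    obtain ⟨dB⟩ := nonempty_denumerable ↥B
    obtain ⟨dX⟩ := nonempty_denumerable X
    let e : ↥B ≃ X := (@Denumerable.eqv ↥B dB).trans (@Denumerable.eqv X dX).symm
    let x₀ : X := Classical.arbitrary X
    let f : X → X := fun x => if h : x ∈ B then e ⟨x, h⟩ else x₀
    have hfI : f ∈ unaryPart I := by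
      intro A' hA'
      have hfin : (A' ∩ B).Finite := by
        by_contra hinf
        exact hcon (A' ∩ B) Set.inter_subset_right hinf
          (hIsub A' hA' _ Set.inter_subset_left)
      have hsub : f '' A' ⊆ f '' (A' ∩ B) ∪ {x₀} := by
        rintro y ⟨x, hx, rfl⟩
        by_cases hxB : x ∈ B
        · exact Or.inl ⟨x, ⟨hx, hxB⟩, rfl⟩
        · right
          simp only [f, dif_neg hxB, Set.mem_singleton_iff]
      exact hIsub _ (hIfin _ ((hfin.image f).union (Set.finite_singleton x₀))) _ hsub
    have hfJ := hUJ hfI A hA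
    have huniv : (Set.univ : Set X) ⊆ f '' A := by
      intro y _
      refine ⟨(e.symm y : X), hBA (e.symm y).2, ?_⟩
      simp only [f, dif_pos (e.symm y).2, Subtype.coe_eta, Equiv.apply_symm_apply]
    exact hJuniv (hJsub _ hfJ _ huniv)
  · intro hreg
    have hIsubreg : ∀ A ∈ I, A ∈ regularization I := by
      intro A hA C hCA hCinf
      exact ⟨C, subset_rfl, hCinf, hIsub A hA C hCA⟩
    constructor
    · refine ⟨?_, ?_, ?_, ?_, hreg⟩
      · intro A hA B hBA C hCB hCinf
        exact hA C (hCB.trans hBA) hCinf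
      · intro A hA B hB C hC hCinf
        by_cases hCA : (C ∩ A).Infinite
        · obtain ⟨D, hDC, hDinf, hDI⟩ := hA (C ∩ A) Set.inter_subset_right hCA
          exact ⟨D, hDC.trans Set.inter_subset_left, hDinf, hDI⟩
        · rw [Set.not_infinite] at hCA
          have hdiff : (C \ (C ∩ A)).Infinite := hCinf.diff hCA
          have hsubB : C \ (C ∩ A) ⊆ B := by
            rintro x ⟨hxC, hxn⟩
            rcases hC hxC with hxA | hxB
            · exact absurd ⟨hxC, hxA⟩ hxn
            · exact hxB
          obtain ⟨D, hDC, hDinf, hDI⟩ := hB _ hsubB hdiff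
          exact ⟨D, fun x hx => (hDC hx).1, hDinf, hDI⟩
      · intro A hAfin B hBA hBinf
        exact absurd (hAfin.subset hBA) hBinf
      · obtain ⟨A, hA, hAinf⟩ := hIinf
        exact ⟨A, hIsubreg A hA, hAinf⟩
    · intro f hf A hA B hB hBinf
      have ht : ∀ b : X, ∃ x : Fin (f.1 + 1) → X,
          b ∈ B → ((∀ i, x i ∈ A) ∧ f.2 x = b) := by
        intro b
        by_cases hb : b ∈ B
        · obtain ⟨x, hx, hxe⟩ := hB hb
          exact ⟨x, fun _ => ⟨hx, hxe⟩⟩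
        · exact ⟨fun _ => Classical.arbitrary X, fun h => absurd h hb⟩
      choose t ht using ht
      have key : ∀ s : Finset (Fin (f.1 + 1)), ∃ B' ⊆ B, B'.Infinite ∧
          ∃ E ∈ I, ∀ b ∈ B', ∀ i ∈ s, t b i ∈ E := by
        intro s
        induction s using Finset.induction_on with
        | empty =>
          exact ⟨B, subset_rfl, hBinf, ∅, hIfin ∅ Set.finite_empty, by simp⟩
        | @insert j s hj ih =>
          obtain ⟨B', hB'B, hB'inf, E, hE, hEmem⟩ := ih
          by_cases hSfin : ((fun b => t b j) '' B').Finite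
          · refine ⟨B', hB'B, hB'inf, E ∪ (fun b => t b j) '' B',
              hIun E hE _ (hIfin _ hSfin), ?_⟩
            intro b hb i hi
            rcases Finset.mem_insert.mp hi with rfl | hi
            · exact Or.inr ⟨b, hb, rfl⟩
            · exact Or.inl (hEmem b hb i hi)
          · have hSA : (fun b => t b j) '' B' ⊆ A := by
              rintro y ⟨b, hb, rfl⟩
              exact (ht b (hB'B hb)).1 j
            obtain ⟨C, hCS, hCinf, hCI⟩ := hA _ hSA hSfin
            refine ⟨{b ∈ B' | t b j ∈ C}, (Set.sep_subset _ _).trans hB'B, ?_,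
              E ∪ C, hIun E hE C hCI, ?_⟩
            · intro hfin
              have : C ⊆ (fun b => t b j) '' {b ∈ B' | t b j ∈ C} := by
                intro c hc
                obtain ⟨b, hb, rfl⟩ := hCS hc
                exact ⟨b, ⟨hb, hc⟩, rfl⟩
              exact hCinf ((hfin.image _).subset this)
            · rintro b ⟨hb, hbC⟩ i hi
              rcases Finset.mem_insert.mp hi with rfl | hi
              · exact Or.inr hbC
              · exact Or.inl (hEmem b hb i hi)
      obtain ⟨B', hB'B, hB'inf, E, hE, hEmem⟩ := key Finset.univ
      refine ⟨B', hB'B, hB'inf, hIsub _ (hf E hE) B' ?_⟩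
      intro b hb
      exact ⟨t b, fun i => hEmem b hb i (Finset.mem_univ i), (ht b (hB'B hb)).2⟩
end

section
/- Let X be countably infinite, let 𝒫 be a set of non-principal prime ideals on X, and let Q be a non-principal prime ideal on X such that f̃(P) ≠ Q for every P ∈ 𝒫 and every function f : X → X. Set I := ⋂𝒫. Then C_{I∩Q} ⊆ C_I; that is, every n-ary operation f on X satisfying f[A^n] ∈ I∩Q for all A ∈ I∩Q also satisfies f[A^n] ∈ I for all A ∈ I. -/
/-- A prime ideal: closed under subsets and finite unions, not containing `X`,
and containing `A` or `X \ A` for every `A ⊆ X`. -/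
def IsPrimeIdeal {X : Type} (P : Set (Set X)) : Prop :=
  (∀ A ∈ P, ∀ B ⊆ A, B ∈ P) ∧
  (∀ A ∈ P, ∀ B ∈ P, A ∪ B ∈ P) ∧
  (Set.univ : Set X) ∉ P ∧
  ∀ A : Set X, A ∈ P ∨ Set.univ \ A ∈ P

/-- A non-principal (prime) ideal contains all finite sets. -/
def NonPrincipalIdeal {X : Type} (P : Set (Set X)) : Prop :=
  ∀ A : Set X, A.Finite → A ∈ P

/-- The image ideal `f̃(P) = { B : f⁻¹[B] ∈ P }`. -/
def pushIdeal {X : Type} (f : X → X) (P : Set (Set X)) : Set (Set X) :=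
  {B | f ⁻¹' B ∈ P}

lemma primeIdeal_empty_mem {X : Type} {P : Set (Set X)} (h : IsPrimeIdeal P) :
    (∅ : Set X) ∈ P := by
  obtain ⟨hsub, _, _, hprime⟩ := h
  rcases hprime Set.univ with h1 | h1
  · exact hsub _ h1 _ (Set.empty_subset _)
  · exact hsub _ h1 _ (by simp)

lemma primeIdeal_iUnion_mem {X : Type} {P : Set (Set X)} (h : IsPrimeIdeal P) :
    ∀ {k : ℕ} (C : Fin k → Set X), (∀ i, C i ∈ P) → (⋃ i, C i) ∈ P := by
  intro k
  induction k with
  | zero => intro C _; simpa using primeIdeal_empty_mem h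
  | succ k ih =>
    intro C hC
    have hsplit : (⋃ i, C i) = (⋃ i : Fin k, C i.castSucc) ∪ C (Fin.last k) := by
      ext x
      simp only [Set.mem_iUnion, Set.mem_union]
      constructor
      · rintro ⟨i, hi⟩
        rcases Fin.eq_castSucc_or_eq_last i with ⟨j, rfl⟩ | rfl
        · exact Or.inl ⟨j, hi⟩
        · exact Or.inr hi
      · rintro (⟨j, hj⟩ | hl)
        · exact ⟨j.castSucc, hj⟩
        · exact ⟨Fin.last k, hl⟩
    rw [hsplit]
    exact h.2.1 _ (ih _ fun i => hC i.castSucc) _ (hC (Fin.last k))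

lemma exists_mem_not_push {X : Type} {P Q : Set (Set X)} (hP : IsPrimeIdeal P)
    (hQ : IsPrimeIdeal Q) (g : X → X) (hne : pushIdeal g P ≠ Q) :
    ∃ T ∈ Q, g ⁻¹' T ∉ P := by
  have : ∃ T : Set X, ¬ (T ∈ pushIdeal g P ↔ T ∈ Q) := by
    by_contra hc
    push_neg at hc
    exact hne (Set.ext hc)
  obtain ⟨T, hT⟩ := this
  rw [iff_iff_implies_and_implies, not_and_or] at hT
  rcases hT with hT | hT
  · push_neg at hT
    -- T ∈ pushIdeal g P, T ∉ Q
    obtain ⟨h1, h2⟩ := hT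
    refine ⟨Set.univ \ T, ?_, ?_⟩
    · rcases hQ.2.2.2 T with h | h
      · exact absurd h h2
      · exact h
    · intro hmem
      have : (Set.univ : Set X) ∈ P := by
        have := hP.2.1 _ h1 _ hmem
        have huniv : g ⁻¹' T ∪ g ⁻¹' (Set.univ \ T) = Set.univ := by
          ext x; simp
        rwa [huniv] at this
      exact hP.2.2.1 this
  · push_neg at hT
    exact ⟨T, hT.1, hT.2⟩

/-- If `Q` is a non-principal prime ideal which is not of the form `f̃(P)` for
any `P ∈ Ps` and unary `f`, and `I = ⋂Ps`, then `C_{I∩Q} ⊆ C_I`. -/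
theorem stmt3 {X : Type} [Countable X] [Infinite X]
    (Ps : Set (Set (Set X))) (Q : Set (Set X))
    (hPs : ∀ P ∈ Ps, IsPrimeIdeal P ∧ NonPrincipalIdeal P)
    (hQ : IsPrimeIdeal Q) (hQnp : NonPrincipalIdeal Q)
    (hRK : ∀ P ∈ Ps, ∀ f : X → X, pushIdeal f P ≠ Q) :
    idealClone (⋂₀ Ps ∩ Q) ⊆ idealClone (⋂₀ Ps) := by
  classical
  intro f hf A hA
  rw [Set.mem_sInter]
  intro P hP
  obtain ⟨hPprime, hPnp⟩ := hPs P hP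
  -- choose witnesses for elements of the image
  have hwit : ∀ y : X, y ∈ opImage f A → ∃ x : Fin (f.1 + 1) → X,
      (∀ i, x i ∈ A) ∧ f.2 x = y := by
    rintro y ⟨x, hx, rfl⟩
    exact ⟨x, hx, rfl⟩
  choose t ht1 ht2 using hwit
  set g : Fin (f.1 + 1) → X → X := fun i y =>
    if h : y ∈ opImage f A then t y h i else y with hg
  -- pick T i ∈ Q with g i ⁻¹' T i ∉ P
  have hT : ∀ i : Fin (f.1 + 1), ∃ T ∈ Q, g i ⁻¹' T ∉ P := fun i =>
    exists_mem_not_push hPprime hQ (g i) (hRK P hP (g i))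
  choose T hTQ hTP using hT
  set B : Set X := A ∩ ⋃ i, T i with hB
  have hBmem : B ∈ ⋂₀ Ps ∩ Q := by
    constructor
    · rw [Set.mem_sInter]
      intro P' hP'
      exact (hPs P' hP').1.1 _ (hA P' hP') _ Set.inter_subset_left
    · exact hQ.1 _ (primeIdeal_iUnion_mem hQ T hTQ) _ Set.inter_subset_right
  have hfB : opImage f B ∈ P := (hf B hBmem).1 P hP
  -- each preimage of S := A \ ⋃ T i is in P
  set S : Set X := A \ ⋃ i, T i with hS
  have hgS : ∀ i, g i ⁻¹' S ∈ P := by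
    intro i
    have h1 : Set.univ \ (g i ⁻¹' T i) ∈ P := by
      rcases hPprime.2.2.2 (g i ⁻¹' T i) with h | h
      · exact absurd h (hTP i)
      · exact h
    refine hPprime.1 _ h1 _ ?_
    intro x hx
    simp only [Set.mem_preimage, hS, Set.mem_diff, Set.mem_iUnion] at hx
    simp only [Set.mem_diff, Set.mem_univ, Set.mem_preimage, true_and]
    exact fun hc => hx.2 ⟨i, hc⟩
  -- covering
  have hcover : opImage f A ⊆ opImage f B ∪ ⋃ i, g i ⁻¹' S := by
    intro y hy
    by_cases hcase : ∃ i, g i y ∈ S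
    · obtain ⟨i, hi⟩ := hcase
      exact Or.inr (Set.mem_iUnion.2 ⟨i, hi⟩)
    · push_neg at hcase
      left
      refine ⟨t y hy, ?_, ht2 y hy⟩
      intro i
      have hga : g i y = t y hy i := by simp [hg, hy]
      have hnS : t y hy i ∉ S := by rw [← hga]; exact hcase i
      have hmemA := ht1 y hy i
      simp only [hS, Set.mem_diff, not_and, not_not] at hnS
      exact ⟨hmemA, hnS hmemA⟩
  have hU : (⋃ i, g i ⁻¹' S) ∈ P := primeIdeal_iUnion_mem hPprime _ hgS
  exact hPprime.1 _ (hPprime.2.1 _ hfB _ hU) _ hcover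
end

section
/- Let X be countably infinite, let I be an ideal (in our sense) on X, and let Q be a non-principal prime ideal on X with I ⊄ Q. If f is a finitary operation on X with f ∈ C_I but f ∉ C_{I∩Q}, then C_I ⊆ ⟨C_{I∩Q} ∪ {f}⟩, the clone generated by C_{I∩Q} together with f. -/
/-- If `I ⊄ Q`, `Q` non-principal prime, and `f ∈ C_I \ C_{I∩Q}`, then
`C_I ⊆ ⟨C_{I∩Q} ∪ {f}⟩`. -/
theorem stmt4 {X : Type} [Countable X] [Infinite X]
    {I Q : Set (Set X)} (hI : IsIdealInOurSense I)
    (hQ : IsPrimeIdeal Q) (hQnp : NonPrincipalIdeal Q) (hIQ : ¬ I ⊆ Q)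
    {f : Ops X} (hf : f ∈ idealClone I) (hf' : f ∉ idealClone (I ∩ Q)) :
    idealClone I ⊆ cloneGen (idealClone (I ∩ Q) ∪ {f}) := by
  classical
  obtain ⟨n, ff⟩ := f
  obtain ⟨hIdown, hIunion, hIfin, -, -⟩ := hI
  obtain ⟨hQdown, hQunion, hQuniv, hQprime⟩ := hQ
  simp only [idealClone, Set.mem_setOf_eq] at hf hf'
  push_neg at hf'
  obtain ⟨A, hAIQ, hfA⟩ := hf'
  obtain ⟨hAI, hAQ⟩ := hAIQ
  have hBI : opImage ⟨n, ff⟩ A ∈ I := hf A hAI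
  have hBQ : opImage ⟨n, ff⟩ A ∉ Q := fun h => hfA ⟨hBI, h⟩
  have hAne : A.Nonempty := by
    by_contra h
    rw [Set.not_nonempty_iff_eq_empty] at h
    apply hBQ
    apply hQnp
    apply Set.Finite.subset Set.finite_empty
    rintro b ⟨t, ht, -⟩
    exact absurd (h ▸ ht 0) (Set.notMem_empty _)
  obtain ⟨a₀, ha₀⟩ := hAne
  obtain ⟨S₀, hS₀I, hS₀Q⟩ := Set.not_subset.mp hIQ
  have hcomplB : Set.univ \ opImage ⟨n, ff⟩ A ∈ Q :=
    (hQprime (opImage ⟨n, ff⟩ A)).resolve_left hBQ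
  have hSI : S₀ ∩ opImage ⟨n, ff⟩ A ∈ I := hIdown S₀ hS₀I _ Set.inter_subset_left
  have hSB : S₀ ∩ opImage ⟨n, ff⟩ A ⊆ opImage ⟨n, ff⟩ A := Set.inter_subset_right
  have hSQ : S₀ ∩ opImage ⟨n, ff⟩ A ∉ Q := by
    intro h
    apply hS₀Q
    refine hQdown _ (hQunion _ h _ hcomplB) _ ?_
    intro x hx
    by_cases hxB : x ∈ opImage ⟨n, ff⟩ A
    · exact Or.inl ⟨hx, hxB⟩
    · exact Or.inr ⟨trivial, hxB⟩
  set S : Set X := S₀ ∩ opImage ⟨n, ff⟩ A with hSdef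
  have hcomplS : Set.univ \ S ∈ Q := (hQprime S).resolve_left hSQ
  have hSne : S.Nonempty := by
    by_contra h
    rw [Set.not_nonempty_iff_eq_empty] at h
    exact hSQ (h ▸ hQnp ∅ Set.finite_empty)
  obtain ⟨b₀, hb₀S⟩ := hSne
  have hb₀B : b₀ ∈ opImage ⟨n, ff⟩ A := hSB hb₀S
  -- choose preimage tuples for elements of B
  have hchoice : ∀ b ∈ opImage ⟨n, ff⟩ A,
      ∃ t : Fin (n+1) → X, (∀ i, t i ∈ A) ∧ ff t = b := by
    rintro b ⟨t, ht, rfl⟩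
    exact ⟨t, ht, rfl⟩
  set τ : X → (Fin (n+1) → X) := fun b =>
    if hb : b ∈ opImage ⟨n, ff⟩ A then (hchoice b hb).choose else fun _ => a₀ with hτdef
  have hτA : ∀ b i, τ b i ∈ A := by
    intro b i
    by_cases hb : b ∈ opImage ⟨n, ff⟩ A
    · simp only [hτdef, dif_pos hb]
      exact (hchoice b hb).choose_spec.1 i
    · simp only [hτdef, dif_neg hb]
      exact ha₀
  have hτf : ∀ b ∈ opImage ⟨n, ff⟩ A, ff (τ b) = b := by
    intro b hb
    simp only [hτdef, dif_pos hb]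
    exact (hchoice b hb).choose_spec.2
  set ψ : X → X := fun v => if v ∈ S then v else b₀ with hψdef
  have hψB : ∀ v, ψ v ∈ opImage ⟨n, ff⟩ A := by
    intro v
    by_cases hv : v ∈ S
    · simp only [hψdef, if_pos hv]
      exact hSB hv
    · simp only [hψdef, if_neg hv]
      exact hb₀B
  -- main argument
  rintro ⟨m, gf⟩ hg
  simp only [idealClone, Set.mem_setOf_eq] at hg
  refine Set.mem_sInter.mpr ?_
  rintro D ⟨⟨hproj, hcomp⟩, hsub⟩
  set a : Fin (n+1) → (Fin (m+1) → X) → X := fun i x => τ (ψ (gf x)) i with hadef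
  have haIQ : ∀ i, (⟨m, a i⟩ : Ops X) ∈ idealClone (I ∩ Q) := by
    intro i C hC
    have hsubA : opImage ⟨m, a i⟩ C ⊆ A := by
      rintro y ⟨x, hx, rfl⟩
      exact hτA _ i
    exact ⟨hIdown A hAI _ hsubA, hQdown A hAQ _ hsubA⟩
  set w : (Fin (m+1+1) → X) → X := fun z =>
    if gf (z ∘ Fin.succ) ∈ S ∧ z 0 ≠ gf (z ∘ Fin.succ) then z 1
    else gf (z ∘ Fin.succ) with hwdef
  have hwIQ : (⟨m+1, w⟩ : Ops X) ∈ idealClone (I ∩ Q) := by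
    intro C hC
    obtain ⟨hCI, hCQ⟩ := hC
    have himg : opImage ⟨m+1, w⟩ C ⊆ C ∪ (opImage ⟨m, gf⟩ C \ S) := by
      rintro y ⟨z, hz, rfl⟩
      have hzs : ∀ i : Fin (m+1), (z ∘ Fin.succ) i ∈ C := fun i => hz i.succ
      by_cases hcond : gf (z ∘ Fin.succ) ∈ S ∧ z 0 ≠ gf (z ∘ Fin.succ)
      · simp only [hwdef, if_pos hcond]
        exact Or.inl (hz 1)
      · simp only [hwdef, if_neg hcond]
        by_cases hS' : gf (z ∘ Fin.succ) ∈ S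
        · have hz0 : z 0 = gf (z ∘ Fin.succ) := by
            by_contra hne
            exact hcond ⟨hS', hne⟩
          exact Or.inl (by rw [← hz0]; exact hz 0)
        · exact Or.inr ⟨⟨z ∘ Fin.succ, hzs, rfl⟩, hS'⟩
    have hgC : opImage ⟨m, gf⟩ C ∈ I := hg C hCI
    constructor
    · exact hIdown _ (hIunion C hCI _ (hIdown _ hgC _ Set.diff_subset)) _ himg
    · refine hQdown _ (hQunion C hCQ _ ?_) _ himg
      exact hQdown _ hcomplS _ (fun x hx => ⟨trivial, hx.2⟩)
  have hfD : (⟨n, ff⟩ : Ops X) ∈ D := hsub (Or.inr rfl)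
  have hφD : (⟨m, fun x => ff (fun i => a i x)⟩ : Ops X) ∈ D :=
    hcomp n m ff a hfD (fun i => hsub (Or.inl (haIQ i)))
  set gs : Fin (m+1+1) → (Fin (m+1) → X) → X :=
    Fin.cases (fun x => ff (fun i => a i x)) (fun j x => x j) with hgsdef
  have hgsD : ∀ i, (⟨m, gs i⟩ : Ops X) ∈ D := by
    intro i
    refine Fin.cases ?_ ?_ i
    · have h0 : gs 0 = fun x => ff (fun i => a i x) := by simp [hgsdef]
      rw [h0]
      exact hφD
    · intro j
      have hs : gs j.succ = fun x => x j := by simp [hgsdef]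
      rw [hs]
      exact hproj m j
  have hfinal : (⟨m, fun x => w (fun i => gs i x)⟩ : Ops X) ∈ D :=
    hcomp (m+1) m w gs (hsub (Or.inl hwIQ)) hgsD
  have hkey : (fun x => w (fun i => gs i x)) = gf := by
    funext x
    have hzsucc : (fun i => gs i x) ∘ Fin.succ = x := by
      funext j
      simp [hgsdef]
    have hz0 : (fun i => gs i x) 0 = ψ (gf x) := by
      simp only [hgsdef, Fin.cases_zero]
      exact hτf _ (hψB _)
    simp only [hwdef, hzsucc]
    by_cases hv : gf x ∈ S
    · have hz0' : (fun i => gs i x) 0 = gf x := by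
        rw [hz0]
        simp only [hψdef, if_pos hv]
      rw [if_neg (fun h => h.2 hz0')]
    · rw [if_neg (fun h => hv h.1)]
  rw [hkey] at hfinal
  exact hfinal
end

section
/- For every ideal I (in our sense) on a countably infinite set X there exists an ideal J (in our sense) such that C_J is a maximal proper subclone of C_I: C_J ⊊ C_I and there is no clone D with C_J ⊊ D ⊊ C_I. -/
open Set Filter Cardinal

namespace IsIdealInOurSense

variable {X : Type} {I : Set (Set X)}

theorem subset_mem (hI : IsIdealInOurSense I) {A B : Set X} (hA : A ∈ I) (hBA : B ⊆ A) :
    B ∈ I :=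
  hI.1 A hA B hBA

theorem union_mem (hI : IsIdealInOurSense I) {A B : Set X} (hA : A ∈ I) (hB : B ∈ I) :
    A ∪ B ∈ I :=
  hI.2.1 A hA B hB

theorem finite_mem (hI : IsIdealInOurSense I) {A : Set X} (hA : A.Finite) : A ∈ I :=
  hI.2.2.1 A hA

theorem sUnion_mem (hI : IsIdealInOurSense I) {S : Set (Set X)} (hS : S.Finite) (hSI : S ⊆ I) :
    ⋃₀ S ∈ I := by
  induction S, hS using Set.Finite.induction_on with
  | empty => simpa using hI.finite_mem finite_empty
  | insert _ _ ih =>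
    rw [sUnion_insert]
    exact hI.union_mem (hSI (mem_insert _ _)) (ih ((subset_insert _ _).trans hSI))

theorem iUnion_mem (hI : IsIdealInOurSense I) {ι : Type*} [Finite ι] {A : ι → Set X}
    (hA : ∀ i, A i ∈ I) : ⋃ i, A i ∈ I := by
  rw [← sUnion_range]
  exact hI.sUnion_mem (finite_range A) (range_subset_iff.mpr hA)

end IsIdealInOurSense

section IndependentFamily

variable {α β ι κ : Type*}

def IsIndependentOn (A : Set α) (E : ι → Set α) : Prop :=
  ∀ (t : Finset ι) (P : Set ι), (A ∩ {x | ∀ i ∈ t, x ∈ E i ↔ i ∈ P}).Infinite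

theorem IsIndependentOn.mono {A B : Set α} {E : ι → Set α} (hE : IsIndependentOn A E)
    (hAB : A ⊆ B) : IsIndependentOn B E :=
  fun t P => (hE t P).mono (inter_subset_inter_left _ hAB)

theorem IsIndependentOn.image {A : Set α} {E : ι → Set α} (hE : IsIndependentOn A E)
    {φ : α → β} (hφ : Function.Injective φ) : IsIndependentOn (φ '' A) (fun i => φ '' E i) := by
  intro t P
  refine ((hE t P).image hφ.injOn).mono ?_
  rintro _ ⟨x, ⟨hxA, hx⟩, rfl⟩
  exact ⟨mem_image_of_mem φ hxA, fun i hi => by rw [hφ.mem_set_image]; exact hx i hi⟩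

theorem IsIndependentOn.comp {A : Set α} {E : κ → Set α} (hE : IsIndependentOn A E)
    {e : ι → κ} (he : Function.Injective e) : IsIndependentOn A (E ∘ e) := by
  classical
  intro t P
  refine (hE (t.image e) (e '' P)).mono (inter_subset_inter_right _ fun x hx i hi => ?_)
  rw [Function.comp_apply, hx (e i) (Finset.mem_image_of_mem e hi), he.mem_set_image]

/-- The independent family of Fichtenholz and Kantorovich. -/
def fkSet (S : Set α) : Set (Finset α × Finset (Finset α)) :=
  {p | ∃ s ∈ p.2, (s : Set α) = ↑p.1 ∩ S}

theorem exists_finset_separating [Nonempty α] (t : Finset (Set α)) :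
    ∃ u : Finset α, ∀ S ∈ t, ∀ S' ∈ t, S ≠ S' → ∃ x ∈ u, ¬(x ∈ S ↔ x ∈ S') := by
  classical
  have hsep (q : Set α × Set α) : ∃ x, q.1 ≠ q.2 → ¬(x ∈ q.1 ↔ x ∈ q.2) := by
    by_cases h : q.1 = q.2
    · exact ⟨Classical.arbitrary α, fun h' => (h' h).elim⟩
    · obtain ⟨x, hx⟩ := not_forall.mp (mt Set.ext h)
      exact ⟨x, fun _ => hx⟩
  choose d hd using hsep
  exact ⟨(t ×ˢ t).image d, fun S hS S' hS' hne =>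
    ⟨d (S, S'), Finset.mem_image_of_mem _ (Finset.mem_product.mpr ⟨hS, hS'⟩), hd (S, S') hne⟩⟩

theorem isIndependentOn_fkSet [Infinite α] : IsIndependentOn univ (fkSet (α := α)) := by
  classical
  intro t P
  obtain ⟨u, hu⟩ := exists_finset_separating t
  -- `point x` lists the traces on `insert x u` of the members of `t` lying in `P`; since `u`
  -- separates the members of `t`, no other member of `t` has one of these traces.
  let point (x : α) : Finset α × Finset (Finset α) :=
    (insert x u, (t.filter (· ∈ P)).image fun S => (insert x u).filter (· ∈ S))
  have hinj : InjOn point (↑u)ᶜ := fun x hx y _ hxy => by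
    have h : insert x u = insert y u := congrArg Prod.fst hxy
    have : x ∈ insert y u := h ▸ Finset.mem_insert_self x u
    exact (Finset.mem_insert.mp this).resolve_right hx
  refine (((u.finite_toSet.infinite_compl).image hinj).mono ?_)
  rintro _ ⟨x, -, rfl⟩
  refine ⟨mem_univ _, fun S hS => ⟨fun ⟨s, hs, hsS⟩ => ?_, fun hSP => ?_⟩⟩
  · obtain ⟨S', hS', rfl⟩ := Finset.mem_image.mp hs
    obtain ⟨hS't, hS'P⟩ := Finset.mem_filter.mp hS'
    by_contra hSP
    obtain ⟨y, hyu, hy⟩ := hu S' hS't S hS (by rintro rfl; exact hSP hS'P)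
    have hy' : y ∈ ((insert x u).filter (· ∈ S') : Set α) ↔ y ∈ (↑(insert x u) ∩ S : Set α) := by
      rw [hsS]
    simp [hyu] at hy'
    exact hy hy'
  · exact ⟨_, Finset.mem_image_of_mem _ (Finset.mem_filter.mpr ⟨hS, hSP⟩), by ext; simp [point]⟩

theorem exists_isIndependentOn {X : Type} {A : Set X} (hA : A.Infinite) :
    ∃ E : Set ℕ → Set X, IsIndependentOn A E := by
  let φ : Finset ℕ × Finset (Finset ℕ) → X := fun p => hA.natEmbedding A (Encodable.encode p)
  have hφ : Function.Injective φ := fun p q h =>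
    Encodable.encode_injective ((hA.natEmbedding A).injective (Subtype.val_injective h))
  refine ⟨fun S => φ '' fkSet S, (isIndependentOn_fkSet.image hφ).mono ?_⟩
  rintro _ ⟨p, -, rfl⟩
  exact (hA.natEmbedding A _).2

theorem exists_isIndependentOn_of_mk_le {X ι : Type} {A : Set X} (hA : A.Infinite)
    (hι : #ι ≤ 𝔠) : ∃ E : ι → Set X, IsIndependentOn A E := by
  rw [← mk_set_nat, Cardinal.le_def] at hι
  obtain ⟨e⟩ := hι
  obtain ⟨E, hE⟩ := exists_isIndependentOn hA
  exact ⟨E ∘ e, hE.comp e.injective⟩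

end IndependentFamily

theorem mk_ops_le {X : Type} [Countable X] : #(Ops X) ≤ 𝔠 := by
  have hX : #X ≤ ℵ₀ := mk_le_aleph0
  have hfun (n : ℕ) : #((Fin (n + 1) → X) → X) ≤ 𝔠 := by
    rw [← power_def, ← aleph0_power_aleph0]
    exact (power_le_power_right hX).trans (power_le_power_left aleph0_ne_zero mk_le_aleph0)
  calc #(Ops X) = sum fun n : ℕ => #((Fin (n + 1) → X) → X) := mk_sigma _
    _ ≤ sum fun _ : ℕ => 𝔠 := sum_le_sum _ _ hfun
    _ = 𝔠 := by rw [sum_const', mk_nat, aleph0_mul_continuum]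

theorem mk_sigma_ops_set_fin_le {X : Type} [Countable X] :
    #(Σ a : Ops X × Set X, Fin (a.1.1 + 1)) ≤ 𝔠 := by
  have hset : #(Set X) ≤ 𝔠 := by
    rw [mk_set, ← two_power_aleph0]
    exact power_le_power_left two_ne_zero mk_le_aleph0
  calc #(Σ a : Ops X × Set X, Fin (a.1.1 + 1))
      ≤ sum fun _ : Ops X × Set X => 𝔠 := by
        rw [mk_sigma]
        exact sum_le_sum _ _ fun a => (mk_fin _).trans_lt (nat_lt_continuum _) |>.le
    _ ≤ 𝔠 := by
        rw [sum_const', mk_prod, lift_id, lift_id]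
        calc #(Ops X) * #(Set X) * 𝔠 ≤ 𝔠 * 𝔠 * 𝔠 := by gcongr; exact mk_ops_le
          _ = 𝔠 := by rw [continuum_mul_self, continuum_mul_self]

theorem IsIdealInOurSense.opImage_mem_of_forall_card_le {X β : Type} {I : Set (Set X)}
    (hI : IsIdealInOurSense I) [Fintype β] (f : Ops X) (τ : X → β) (R : Set X)
    (h : ∀ T : Finset β, T.card ≤ f.1 + 1 → opImage f (R ∩ τ ⁻¹' ↑T) ∈ I) :
    opImage f R ∈ I := by
  classical
  refine hI.subset_mem (hI.iUnion_mem (A := fun T : {T : Finset β // T.card ≤ f.1 + 1} =>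
    opImage f (R ∩ τ ⁻¹' ↑T.1)) fun T => h T.1 T.2) ?_
  rintro _ ⟨v, hv, rfl⟩
  refine mem_iUnion.mpr ⟨⟨Finset.univ.image (τ ∘ v), Finset.card_image_le.trans (by simp)⟩,
    v, fun i => ⟨hv i, ?_⟩, rfl⟩
  simp

theorem exists_ultrafilter_of_forall_infinite {X ι : Type} (A : Set X) (K : ι → Set X)
    (h : ∀ l : Finset ι, (A ∩ ⋂ a ∈ l, (K a)ᶜ).Infinite) :
    ∃ U : Ultrafilter X, A ∈ U ∧ (U : Filter X) ≤ cofinite ∧ ∀ a, K a ∉ U := by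
  classical
  let F (l : Finset ι) : Filter X := cofinite ⊓ 𝓟 (A ∩ ⋂ a ∈ l, (K a)ᶜ)
  have hdir : Directed (· ≥ ·) F := fun l₁ l₂ => ⟨l₁ ∪ l₂,
    inf_le_inf_left _ (principal_mono.mpr fun x hx =>
      ⟨hx.1, mem_iInter₂.mpr fun a ha => mem_iInter₂.mp hx.2 a (Finset.mem_union_left _ ha)⟩),
    inf_le_inf_left _ (principal_mono.mpr fun x hx =>
      ⟨hx.1, mem_iInter₂.mpr fun a ha => mem_iInter₂.mp hx.2 a (Finset.mem_union_right _ ha)⟩)⟩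
  have : (⨅ l, F l).NeBot :=
    iInf_neBot_of_directed' hdir fun l => cofinite_inf_principal_neBot_iff.mpr (h l)
  have hU : ↑(Ultrafilter.of (⨅ l, F l)) ≤ ⨅ l, F l := Ultrafilter.of_le _
  refine ⟨Ultrafilter.of (⨅ l, F l), hU (mem_iInf_of_mem ∅ (mem_inf_of_right
    (mem_principal.mpr inter_subset_left))), hU.trans (iInf_le_of_le ∅ inf_le_left), fun a => ?_⟩
  refine Ultrafilter.compl_mem_iff_notMem.mp (hU (mem_iInf_of_mem {a} (mem_inf_of_right
    (mem_principal.mpr fun x hx => ?_))))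
  simpa using hx.2

def cellOf {X κ : Type} {m : κ → ℕ} (E : (Σ a : κ, Fin (m a)) → Set X) (a : κ) (x : X) :
    Set (Fin (m a)) :=
  {j | x ∈ E ⟨a, j⟩}

theorem IsIndependentOn.infinite_inter_cellOf_notMem {X κ : Type} {A : Set X} {m : κ → ℕ}
    {E : (Σ a : κ, Fin (m a)) → Set X} (hE : IsIndependentOn A E)
    (T : ∀ a, Finset (Set (Fin (m a)))) (hT : ∀ a, T a ≠ Finset.univ) (l : Finset κ) :
    (A ∩ ⋂ a ∈ l, {x | cellOf E a x ∉ T a}).Infinite := by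
  have hσ (a : κ) : ∃ σ, σ ∉ T a := by simpa [Finset.eq_univ_iff_forall] using hT a
  choose σ hσ using hσ
  refine (hE (l.sigma fun _ => Finset.univ) {i | i.2 ∈ σ i.1}).mono fun x hx =>
    ⟨hx.1, mem_iInter₂.mpr fun a ha => ?_⟩
  have hcell : cellOf E a x = σ a :=
    Set.ext fun j => hx.2 ⟨a, j⟩ (Finset.mem_sigma.mpr ⟨ha, Finset.mem_univ j⟩)
  simpa [hcell] using hσ a

def ControlsImages {X : Type} (I : Set (Set X)) (U : Ultrafilter X) : Prop :=
  ∀ (f : Ops X) (R : Set X), (∀ r ⊆ R, r ∉ U → opImage f r ∈ I) → opImage f R ∈ I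

theorem exists_ultrafilter_controlsImages {X : Type} [Countable X] {I : Set (Set X)}
    (hI : IsIdealInOurSense I) {A : Set X} (hA : A.Infinite) :
    ∃ U : Ultrafilter X, A ∈ U ∧ (U : Filter X) ≤ cofinite ∧ ControlsImages I U := by
  classical
  obtain ⟨E, hE⟩ := exists_isIndependentOn_of_mk_le hA (mk_sigma_ops_set_fin_le (X := X))
  let Bad (a : Ops X × Set X) (T : Finset (Set (Fin (a.1.1 + 1)))) : Prop :=
    T ≠ Finset.univ ∧ opImage a.1 (a.2 ∩ cellOf E a ⁻¹' ↑T) ∉ I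
  have hchoice (a : Ops X × Set X) :
      ∃ T, T ≠ Finset.univ ∧ ((∃ T', Bad a T') → Bad a T) := by
    by_cases h : ∃ T', Bad a T'
    · obtain ⟨T', hT'⟩ := h
      exact ⟨T', hT'.1, fun _ => hT'⟩
    · exact ⟨∅, Finset.univ_nonempty.ne_empty.symm, fun h' => absurd h' h⟩
  choose T hTne hT using hchoice
  obtain ⟨U, hAU, hUcof, hU⟩ := exists_ultrafilter_of_forall_infinite A
    (fun a => a.2 ∩ cellOf E a ⁻¹' ↑(T a)) fun l =>
      (hE.infinite_inter_cellOf_notMem T hTne l).mono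
        (inter_subset_inter_right _ (iInter₂_mono fun a _ _ hx hx' => (hx : _ ∉ _) hx'.2))
  refine ⟨U, hAU, hUcof, fun f R hR => ?_⟩
  by_contra hfR
  have hcard (T' : Finset (Set (Fin (f.1 + 1)))) (hT' : T'.card ≤ f.1 + 1) :
      T' ≠ Finset.univ := by
    rintro rfl
    rw [Finset.card_univ, Fintype.card_set, Fintype.card_fin] at hT'
    exact Nat.lt_two_pow_self.not_ge hT'
  have hbad : ∃ T', Bad (f, R) T' := by
    by_contra h
    exact hfR (hI.opImage_mem_of_forall_card_le f (cellOf E (f, R)) R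
      fun T' hT' => not_not.mp fun hT'I => h ⟨T', hcard T' hT', hT'I⟩)
  exact (hT (f, R) hbad).2 (hR _ inter_subset_left (hU (f, R)))

section Ultrafilter

variable {X : Type} {U : Ultrafilter X}

theorem infinite_of_mem_of_le_cofinite (hU : (U : Filter X) ≤ cofinite) {A : Set X}
    (hA : A ∈ U) : A.Infinite :=
  fun hfin => Ultrafilter.compl_mem_iff_notMem.mp (hU hfin.compl_mem_cofinite) hA

theorem exists_infinite_subset_notMem {A : Set X} (hA : A.Infinite) :
    ∃ B ⊆ A, B.Infinite ∧ B ∉ U := by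
  let e := hA.natEmbedding A
  have he : Function.Injective fun n => (e n : X) := Subtype.val_injective.comp e.injective
  let B₁ := range fun n => (e (2 * n) : X)
  let B₂ := range fun n => (e (2 * n + 1) : X)
  have hB₁ : B₁.Infinite :=
    infinite_range_of_injective (he.comp fun a b h => by simpa using h)
  have hB₂ : B₂.Infinite :=
    infinite_range_of_injective (he.comp fun a b h => by simpa using h)
  have hsub₁ : B₁ ⊆ A := range_subset_iff.mpr fun n => (e _).2
  have hsub₂ : B₂ ⊆ A := range_subset_iff.mpr fun n => (e _).2
  by_cases h₁ : B₁ ∈ U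
  · refine ⟨B₂, hsub₂, hB₂, fun h₂ => ?_⟩
    obtain ⟨_, ⟨a, rfl⟩, b, hb⟩ := U.nonempty_of_mem (U.inter_mem h₁ h₂)
    have := he hb
    omega
  · exact ⟨B₁, hsub₁, hB₁, h₁⟩

end Ultrafilter

theorem exists_image_eq_of_infinite {X : Type} [Countable X] {B P : Set X} (hB : B.Infinite)
    (hP : P.Infinite) : ∃ u : X → X, (∀ x, u x ∈ P) ∧ u '' B = P := by
  classical
  have : Infinite B := hB.to_subtype
  have : Infinite P := hP.to_subtype
  obtain ⟨e⟩ : Nonempty (B ≃ P) := Cardinal.eq.mp (by rw [mk_eq_aleph0, mk_eq_aleph0])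
  obtain ⟨p, hp⟩ := hP.nonempty
  refine ⟨fun x => if h : x ∈ B then e ⟨x, h⟩ else p, fun x => ?_, ?_⟩
  · dsimp only
    split_ifs
    exacts [(e _).2, hp]
  · ext y
    refine ⟨?_, fun hy => ⟨e.symm ⟨y, hy⟩, (e.symm ⟨y, hy⟩).2, by simp⟩⟩
    rintro ⟨x, hx, rfl⟩
    simp [hx]

def unaryOp {X : Type} (u : X → X) : Ops X :=
  ⟨0, fun v => u (v 0)⟩

theorem opImage_unaryOp {X : Type} (u : X → X) (A : Set X) : opImage (unaryOp u) A = u '' A := by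
  ext y
  constructor
  · rintro ⟨v, hv, rfl⟩
    exact mem_image_of_mem u (hv 0)
  · rintro ⟨x, hx, rfl⟩
    exact ⟨fun _ => x, fun _ => hx, rfl⟩

theorem mem_idealClone_of_forall_mem {X : Type} {J : Set (Set X)}
    (hJ : ∀ A ∈ J, ∀ B ⊆ A, B ∈ J) {C : Set X} (hC : C ∈ J) {m : ℕ}
    {g : (Fin (m + 1) → X) → X} (hg : ∀ x, g x ∈ C) : (⟨m, g⟩ : Ops X) ∈ idealClone J :=
  fun _ _ => hJ C hC _ (by rintro _ ⟨x, -, rfl⟩; exact hg x)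

namespace IsClone

variable {X : Type} {D : Set (Ops X)}

theorem mem_of_forall_mem_opImage (hD : IsClone D) {n m : ℕ} {f : (Fin (n + 1) → X) → X}
    (hf : ⟨n, f⟩ ∈ D) {C : Set X}
    (hC : ∀ g : (Fin (m + 1) → X) → X, (∀ x, g x ∈ C) → (⟨m, g⟩ : Ops X) ∈ D)
    {h : (Fin (m + 1) → X) → X} (hh : ∀ x, h x ∈ opImage ⟨n, f⟩ C) : (⟨m, h⟩ : Ops X) ∈ D := by
  choose w hwC hw using hh
  have := hD.2 n m f (fun i x => w x i) hf fun i => hC _ fun x => hwC x i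
  rwa [show (fun x => f fun i => w x i) = h from funext hw] at this

theorem cons_mem (hD : IsClone D) {m : ℕ} {v : (Fin (m + 2) → X) → X}
    {G : (Fin (m + 1) → X) → X} (hv : ⟨m + 1, v⟩ ∈ D) (hG : ⟨m, G⟩ ∈ D) :
    (⟨m, fun x => v (Fin.cons (G x) x)⟩ : Ops X) ∈ D := by
  have := hD.2 (m + 1) m v (Fin.cons G fun j x => x j) hv
    (Fin.cases (by simpa using hG) fun j => by simpa using hD.1 m j)
  convert this using 4 with x
  ext i
  cases i using Fin.cases <;> simp

end IsClone

def idealAvoiding {X : Type} (I : Set (Set X)) (U : Ultrafilter X) : Set (Set X) :=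
  {A | A ∈ I ∧ A ∉ U}

section IdealAvoiding

variable {X : Type} {I : Set (Set X)} {U : Ultrafilter X}

theorem subset_mem_idealAvoiding (hI : IsIdealInOurSense I) {A B : Set X}
    (hA : A ∈ idealAvoiding I U) (hBA : B ⊆ A) : B ∈ idealAvoiding I U :=
  ⟨hI.subset_mem hA.1 hBA, fun hB => hA.2 (U.mem_of_superset hB hBA)⟩

theorem isIdealInOurSense_idealAvoiding (hI : IsIdealInOurSense I)
    (hU : (U : Filter X) ≤ cofinite) {A : Set X} (hAI : A ∈ I) (hA : A.Infinite) :
    IsIdealInOurSense (idealAvoiding I U) := by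
  obtain ⟨B, hBA, hB, hBU⟩ := exists_infinite_subset_notMem hA
  refine ⟨fun A hA B hBA => subset_mem_idealAvoiding hI hA hBA,
    fun A hA B hB => ⟨hI.union_mem hA.1 hB.1, fun h => ?_⟩,
    fun A hA => ⟨hI.finite_mem hA, fun h => infinite_of_mem_of_le_cofinite hU h hA⟩,
    ⟨B, ⟨hI.subset_mem hAI hBA, hBU⟩, hB⟩, fun h => hI.2.2.2.2 h.1⟩
  rcases Ultrafilter.union_mem_iff.mp h with h | h
  exacts [hA.2 h, hB.2 h]

theorem idealClone_idealAvoiding_subset (hI : IsIdealInOurSense I) (hU : ControlsImages I U) :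
    idealClone (idealAvoiding I U) ⊆ idealClone I :=
  fun f hf A hA => hU f A fun r hr hrU => (hf r ⟨hI.subset_mem hA hr, hrU⟩).1

theorem exists_mem_idealClone_notMem_idealAvoiding [Countable X] (hI : IsIdealInOurSense I)
    (hU : (U : Filter X) ≤ cofinite) {A : Set X} (hAI : A ∈ I) (hAU : A ∈ U) :
    ∃ f ∈ idealClone I, f ∉ idealClone (idealAvoiding I U) := by
  obtain ⟨B, hBA, hB, hBU⟩ := exists_infinite_subset_notMem (infinite_of_mem_of_le_cofinite hU hAU)
  have hPU : A \ B ∈ U := U.inter_mem hAU (Ultrafilter.compl_mem_iff_notMem.mpr hBU)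
  obtain ⟨u, huP, huB⟩ := exists_image_eq_of_infinite hB (infinite_of_mem_of_le_cofinite hU hPU)
  refine ⟨unaryOp u, fun C _ => hI.subset_mem hAI ?_, fun hu => ?_⟩
  · rw [opImage_unaryOp]
    rintro _ ⟨x, -, rfl⟩
    exact (huP x).1
  · have := (hu B ⟨hI.subset_mem hAI hBA, hBU⟩).2
    rw [opImage_unaryOp, huB] at this
    exact this hPU

/-- Fed `ψ (g x)` as first argument, this operation returns `g x`. It lies in `C_J` because `ψ`
fixes the `U`-large set `E` pointwise, so `ψ ⁻¹' C` is `U`-small whenever `C` is. -/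
theorem decode_mem_idealClone_idealAvoiding [DecidableEq X] (hI : IsIdealInOurSense I)
    (hU : (U : Filter X) ≤ cofinite) {E : Set X} (hE : E ∈ U) {ψ : X → X}
    (hψ : ∀ y ∈ E, ψ y = y) {m : ℕ} {g : (Fin (m + 1) → X) → X}
    (hg : ⟨m, g⟩ ∈ idealClone I) (c : X) :
    (⟨m + 1, fun z => if z 0 = ψ (g (Fin.tail z)) then g (Fin.tail z) else c⟩ : Ops X) ∈
      idealClone (idealAvoiding I U) := by
  rintro C ⟨hCI, hCU⟩
  refine subset_mem_idealAvoiding hI (A := insert c (opImage ⟨m, g⟩ C ∩ ψ ⁻¹' C))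
    ⟨?_, fun h => hCU ?_⟩ ?_
  · exact hI.subset_mem (hI.union_mem (hI.finite_mem (finite_singleton c)) (hg C hCI))
      (insert_subset_insert inter_subset_left)
  · rw [insert_eq, Ultrafilter.union_mem_iff] at h
    rcases h with hc | h
    · exact absurd (finite_singleton c) (infinite_of_mem_of_le_cofinite hU hc)
    · exact U.mem_of_superset (U.inter_mem h hE) fun y hy => hψ y hy.2 ▸ hy.1.2
  · rintro _ ⟨z, hz, rfl⟩
    dsimp only
    split_ifs with h
    · refine mem_insert_of_mem _ ⟨⟨Fin.tail z, fun i => hz i.succ, rfl⟩, ?_⟩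
      rw [mem_preimage, ← h]
      exact hz 0
    · exact mem_insert c _

theorem idealClone_subset_of_mem_diff (hI : IsIdealInOurSense I) (hU : (U : Filter X) ≤ cofinite)
    {D : Set (Ops X)} (hD : IsClone D) (hJD : idealClone (idealAvoiding I U) ⊆ D) {f : Ops X}
    (hfD : f ∈ D) (hfI : f ∈ idealClone I) (hfJ : f ∉ idealClone (idealAvoiding I U)) :
    idealClone I ⊆ D := by
  classical
  obtain ⟨n, f⟩ := f
  obtain ⟨C, hC, hEJ⟩ : ∃ C ∈ idealAvoiding I U, opImage ⟨n, f⟩ C ∉ idealAvoiding I U := by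
    simpa [idealClone] using hfJ
  set E := opImage ⟨n, f⟩ C
  have hEU : E ∈ U := not_not.mp fun h => hEJ ⟨hfI C hC.1, h⟩
  obtain ⟨c, hc⟩ := U.nonempty_of_mem hEU
  let ψ (y : X) : X := if y ∈ E then y else c
  have hψE (y : X) : ψ y ∈ E := by unfold ψ; split_ifs <;> assumption
  have hψ (y : X) (hy : y ∈ E) : ψ y = y := if_pos hy
  rintro ⟨m, g⟩ hg
  have hψg : (⟨m, fun x => ψ (g x)⟩ : Ops X) ∈ D :=
    hD.mem_of_forall_mem_opImage hfD
      (fun _ hh => hJD (mem_idealClone_of_forall_mem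
        (fun _ hA _ hBA => subset_mem_idealAvoiding hI hA hBA) hC hh)) fun x => hψE (g x)
  simpa using hD.cons_mem (hJD (decode_mem_idealClone_idealAvoiding hI hU hEU hψ hg c)) hψg

end IdealAvoiding

theorem stmt5_general {X : Type} [Countable X]
    {I : Set (Set X)} (hI : IsIdealInOurSense I) :
    ∃ J : Set (Set X), IsIdealInOurSense J ∧ idealClone J ⊂ idealClone I ∧
      ∀ D : Set (Ops X), IsClone D → ¬ (idealClone J ⊂ D ∧ D ⊂ idealClone I) := by
  obtain ⟨A, hAI, hA⟩ := hI.2.2.2.1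
  obtain ⟨U, hAU, hUcof, hUI⟩ := exists_ultrafilter_controlsImages hI hA
  obtain ⟨f, hfI, hfJ⟩ := exists_mem_idealClone_notMem_idealAvoiding hI hUcof hAI hAU
  refine ⟨idealAvoiding I U, isIdealInOurSense_idealAvoiding hI hUcof hAI hA,
    ssubset_iff_subset_not_subset.mpr
      ⟨idealClone_idealAvoiding_subset hI hUI, fun h => hfJ (h hfI)⟩,
    fun D hD ⟨hJD, hDI⟩ => ?_⟩
  obtain ⟨g, hgD, hgJ⟩ := exists_of_ssubset hJD
  exact hDI.not_subset
    (idealClone_subset_of_mem_diff hI hUcof hD hJD.subset hgD (hDI.subset hgD) hgJ)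

/-- Every ideal clone contains a maximal proper subclone which is itself an
ideal clone. -/
theorem stmt5 {X : Type} [Countable X] [Infinite X]
    {I : Set (Set X)} (hI : IsIdealInOurSense I) :
    ∃ J : Set (Set X), IsIdealInOurSense J ∧ idealClone J ⊂ idealClone I ∧
      ∀ D : Set (Ops X), IsClone D → ¬ (idealClone J ⊂ D ∧ D ⊂ idealClone I) :=
  stmt5_general hI
end

section
/- Let I be an ideal (in our sense) on a countably infinite set X and let f be an n-ary operation on X. If f[B^n] = X for some B ∈ I, then ⟨C_I ∪ {f}⟩ = O, i.e., the clone generated by C_I together with f is the clone of all finitary operations. -/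
/-- If `f` maps the power of a small set onto all of `X`, then `C_I` together
with `f` generates the full clone. -/
theorem stmt8 {X : Type} [Countable X] [Infinite X]
    {I : Set (Set X)} (hI : IsIdealInOurSense I)
    (f : Ops X) (B : Set X) (hB : B ∈ I) (hf : opImage f B = Set.univ) :
    cloneGen (idealClone I ∪ {f}) = Set.univ := by
  have hs : ∀ x : X, ∃ y : Fin (f.1 + 1) → X, (∀ i, y i ∈ B) ∧ f.2 y = x := by
    intro x
    have hx : x ∈ opImage f B := hf ▸ Set.mem_univ x
    rcases hx with ⟨y, hy, hyx⟩
    exact ⟨y, hy, hyx⟩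
  choose s hs1 hs2 using hs
  apply Set.eq_univ_of_forall
  rintro ⟨m, g⟩
  intro D hD
  obtain ⟨⟨hproj, hcomp⟩, hsub⟩ := hD
  have hfD : (⟨f.1, f.2⟩ : Ops X) ∈ D := hsub (Or.inr rfl)
  set gi : Fin (f.1 + 1) → (Fin (m + 1) → X) → X := fun i x => s (g x) i with hgi
  have hgiD : ∀ i, (⟨m, gi i⟩ : Ops X) ∈ D := by
    intro i
    apply hsub
    left
    intro A hA
    apply hI.1 B hB
    rintro x ⟨y, _, rfl⟩
    exact hs1 (g y) i
  have := hcomp f.1 m f.2 gi hfD hgiD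
  have heq : (fun x => f.2 fun i => gi i x) = g := by
    funext x
    exact hs2 (g x)
  rwa [heq] at this
end

section
/- Let X be countably infinite, let A ⊆ X be infinite, and let 𝒜 be a clone on X containing the ideal clone C_I for some ideal I in our sense. Set J := { B ⊆ X : B ⊆ f[A^n] for some n-ary f ∈ 𝒜 }. Then either X ∈ J, or: J is an ideal in our sense, A ∈ J, and 𝒜 ⊆ C_J. -/
/-!
`J` is closed under the operations of `𝒜`: if `B i ⊆ fᵢ[A^{nᵢ}]` for `i ≤ m`, then
`g[B 0 × ⋯ × B m]` lies in the image of `A` under the superposition `g(f₀, …, fₘ)` (after padding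
the `fᵢ` to a common arity with dummy variables). This gives `𝒜 ⊆ C_J`. Moreover `C_I ⊆ 𝒜`
contains the constants and the switch `(x, y, z) ↦ if z = a then x else y`, which maps every
`B³` into `B`; hence `J` contains the singletons and is closed under binary unions, as
`B₁ ∪ B₂ ⊆ switch[B₁ × B₂ × {a, b}]` for distinct `a, b ∈ A`.
-/

open Function Set

variable {X : Type}

def opImageFamily (𝒜 : Set (Ops X)) (A : Set X) : Set (Set X) :=
  {B | ∃ f ∈ 𝒜, B ⊆ opImage f A}

open Classical in
noncomputable def switchOp (a : X) : Ops X :=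
  ⟨2, fun v => if v 2 = a then v 0 else v 1⟩

theorem opImage_switchOp_subset (a : X) (B : Set X) : opImage (switchOp a) B ⊆ B := by
  rintro _ ⟨v, hv, rfl⟩
  dsimp only [switchOp]
  split
  · exact hv 0
  · exact hv 1

section IdealClone

variable {I : Set (Set X)}

theorem mem_idealClone_of_opImage_subset (hI : IsIdealInOurSense I) {f : Ops X}
    (hf : ∀ B, opImage f B ⊆ B) : f ∈ idealClone I :=
  fun B hB => hI.1 B hB _ (hf B)

theorem const_mem_idealClone (hI : IsIdealInOurSense I) (n : ℕ) (c : X) :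
    (⟨n, fun _ => c⟩ : Ops X) ∈ idealClone I := by
  intro B _
  refine hI.1 _ (hI.2.2.1 {c} (finite_singleton c)) _ ?_
  rintro _ ⟨_, _, rfl⟩
  rfl

end IdealClone

section Clone

variable {𝒜 : Set (Ops X)} {A : Set X}

theorem IsClone.precomp_mem (h𝒜 : IsClone 𝒜) {n k : ℕ} {f : (Fin (n + 1) → X) → X}
    (hf : (⟨n, f⟩ : Ops X) ∈ 𝒜) (e : Fin (n + 1) → Fin (k + 1)) :
    (⟨k, fun x => f (x ∘ e)⟩ : Ops X) ∈ 𝒜 :=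
  h𝒜.2 n k f (fun i x => x (e i)) hf fun i => h𝒜.1 k (e i)

theorem opImage_subset_opImage_precomp {n k : ℕ} (f : (Fin (n + 1) → X) → X)
    {e : Fin (n + 1) → Fin (k + 1)} (he : Injective e) (hA : A.Nonempty) :
    opImage ⟨n, f⟩ A ⊆ opImage ⟨k, fun x => f (x ∘ e)⟩ A := by
  obtain ⟨a, ha⟩ := hA
  rintro _ ⟨x, hx, rfl⟩
  refine ⟨extend e x fun _ => a, fun j => ?_, ?_⟩
  · by_cases hj : ∃ i, e i = j
    · obtain ⟨i, rfl⟩ := hj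
      simpa [he.extend_apply] using hx i
    · simpa [extend_apply' _ _ _ hj] using ha
  · exact congrArg f (extend_comp he x _)

theorem IsClone.exists_opImage_subset_of_le (h𝒜 : IsClone 𝒜) (hA : A.Nonempty) {f : Ops X}
    (hf : f ∈ 𝒜) {k : ℕ} (hk : f.1 ≤ k) :
    ∃ g, (⟨k, g⟩ : Ops X) ∈ 𝒜 ∧ opImage f A ⊆ opImage ⟨k, g⟩ A := by
  obtain ⟨n, f⟩ := f
  have hnk : n + 1 ≤ k + 1 := Nat.succ_le_succ hk
  exact ⟨_, h𝒜.precomp_mem hf (Fin.castLE hnk),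
    opImage_subset_opImage_precomp f (Fin.castLE_injective hnk) hA⟩

theorem IsClone.image_pi_mem_opImageFamily (h𝒜 : IsClone 𝒜) (hA : A.Nonempty) {m : ℕ}
    {g : (Fin (m + 1) → X) → X} (hg : (⟨m, g⟩ : Ops X) ∈ 𝒜) {B : Fin (m + 1) → Set X}
    (hB : ∀ i, B i ∈ opImageFamily 𝒜 A) :
    g '' {x | ∀ i, x i ∈ B i} ∈ opImageFamily 𝒜 A := by
  choose f hf hBf using hB
  set k := Finset.univ.sup fun i => (f i).1
  have hk : ∀ i, (f i).1 ≤ k := fun i => Finset.le_sup (f := fun i => (f i).1) (Finset.mem_univ i)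
  choose f' hf' hff' using fun i => h𝒜.exists_opImage_subset_of_le hA (hf i) (hk i)
  let e : Fin (m + 1) × Fin (k + 1) ≃ Fin (m * k + m + k + 1) :=
    finProdFinEquiv.trans (finCongr (by ring))
  refine ⟨⟨m * k + m + k, fun x => g fun i => f' i (x ∘ fun j => e (i, j))⟩,
    h𝒜.2 _ _ _ _ hg fun i => h𝒜.precomp_mem (hf' i) _, ?_⟩
  rintro _ ⟨y, hy, rfl⟩
  have hpre : ∀ i, ∃ z : Fin (k + 1) → X, (∀ j, z j ∈ A) ∧ f' i z = y i :=
    fun i => hff' i (hBf i (hy i))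
  choose x hxA hxy using hpre
  refine ⟨fun p => x (e.symm p).1 (e.symm p).2, fun p => hxA _ _, ?_⟩
  simp only [comp_def, Equiv.symm_apply_apply]
  exact congrArg g (funext hxy)

theorem IsClone.subset_idealClone_opImageFamily (h𝒜 : IsClone 𝒜) (hA : A.Nonempty) :
    𝒜 ⊆ idealClone (opImageFamily 𝒜 A) := by
  rintro ⟨m, g⟩ hg B hB
  exact h𝒜.image_pi_mem_opImageFamily hA hg fun _ => hB

theorem IsClone.self_mem_opImageFamily (h𝒜 : IsClone 𝒜) : A ∈ opImageFamily 𝒜 A :=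
  ⟨⟨0, fun x => x 0⟩, h𝒜.1 0 0, fun u hu => ⟨fun _ => u, fun _ => hu, rfl⟩⟩

theorem opImageFamily_mono {B C : Set X} (hB : B ∈ opImageFamily 𝒜 A) (hCB : C ⊆ B) :
    C ∈ opImageFamily 𝒜 A :=
  let ⟨f, hf, hBf⟩ := hB
  ⟨f, hf, hCB.trans hBf⟩

theorem singleton_mem_opImageFamily (hA : A.Nonempty) {c : X}
    (hc : (⟨0, fun _ => c⟩ : Ops X) ∈ 𝒜) : {c} ∈ opImageFamily 𝒜 A := by
  obtain ⟨a, ha⟩ := hA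
  refine ⟨_, hc, ?_⟩
  rintro _ rfl
  exact ⟨fun _ => a, fun _ => ha, rfl⟩

theorem IsClone.union_mem_opImageFamily (h𝒜 : IsClone 𝒜) {a b : X} (ha : a ∈ A) (hb : b ∈ A)
    (hba : b ≠ a) (hsw : switchOp a ∈ 𝒜) {B₁ B₂ : Set X} (h₁ : B₁ ∈ opImageFamily 𝒜 A)
    (h₂ : B₂ ∈ opImageFamily 𝒜 A) : B₁ ∪ B₂ ∈ opImageFamily 𝒜 A := by
  rcases B₁.eq_empty_or_nonempty with rfl | ⟨c₁, hc₁⟩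
  · simpa using h₂
  rcases B₂.eq_empty_or_nonempty with rfl | ⟨c₂, hc₂⟩
  · simpa using h₁
  have hpair : {a, b} ∈ opImageFamily 𝒜 A :=
    opImageFamily_mono h𝒜.self_mem_opImageFamily (insert_subset ha (singleton_subset_iff.2 hb))
  have himage := h𝒜.image_pi_mem_opImageFamily ⟨a, ha⟩ hsw (B := ![B₁, B₂, {a, b}])
    (by simp [Fin.forall_fin_succ, h₁, h₂, hpair])
  refine opImageFamily_mono himage ?_
  rintro u (hu | hu)
  · exact ⟨![u, c₂, a], by simp [Fin.forall_fin_succ, hu, hc₂], by simp⟩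
  · exact ⟨![c₁, u, b], by simp [Fin.forall_fin_succ, hu, hc₁], by simp [hba]⟩

theorem IsClone.isIdealInOurSense_opImageFamily (h𝒜 : IsClone 𝒜) {I : Set (Set X)}
    (hI : IsIdealInOurSense I) (hsub : idealClone I ⊆ 𝒜) (hA : A.Infinite)
    (huniv : univ ∉ opImageFamily 𝒜 A) : IsIdealInOurSense (opImageFamily 𝒜 A) := by
  obtain ⟨a, ha⟩ := hA.nonempty
  obtain ⟨b, hb, hba⟩ := (hA.sdiff (finite_singleton a)).nonempty
  have hsw : switchOp a ∈ 𝒜 :=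
    hsub (mem_idealClone_of_opImage_subset hI (opImage_switchOp_subset a))
  have hunion : ∀ B₁ ∈ opImageFamily 𝒜 A, ∀ B₂ ∈ opImageFamily 𝒜 A,
      B₁ ∪ B₂ ∈ opImageFamily 𝒜 A :=
    fun _ h₁ _ h₂ => h𝒜.union_mem_opImageFamily ha hb hba hsw h₁ h₂
  refine ⟨fun B hB C hC => opImageFamily_mono hB hC, hunion, fun B hB => ?_,
    ⟨A, h𝒜.self_mem_opImageFamily, hA⟩, huniv⟩
  induction B, hB using Set.Finite.induction_on with
  | empty => exact opImageFamily_mono h𝒜.self_mem_opImageFamily (empty_subset A)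
  | insert _ _ ih =>
    exact hunion _ (singleton_mem_opImageFamily ⟨a, ha⟩ (hsub (const_mem_idealClone hI 0 _))) _ ih

end Clone

theorem stmt9_general {X : Type}
    {A : Set X} (hA : A.Infinite)
    {𝒜 : Set (Ops X)} (h𝒜 : IsClone 𝒜)
    {I : Set (Set X)} (hI : IsIdealInOurSense I) (hsub : idealClone I ⊆ 𝒜) :
    (Set.univ : Set X) ∈ {B : Set X | ∃ f ∈ 𝒜, B ⊆ opImage f A} ∨
    (IsIdealInOurSense {B : Set X | ∃ f ∈ 𝒜, B ⊆ opImage f A} ∧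
      A ∈ {B : Set X | ∃ f ∈ 𝒜, B ⊆ opImage f A} ∧
      𝒜 ⊆ idealClone {B : Set X | ∃ f ∈ 𝒜, B ⊆ opImage f A}) := by
  by_cases huniv : univ ∈ opImageFamily 𝒜 A
  · exact Or.inl huniv
  · exact Or.inr ⟨h𝒜.isIdealInOurSense_opImageFamily hI hsub hA huniv,
      h𝒜.self_mem_opImageFamily, h𝒜.subset_idealClone_opImageFamily hA.nonempty⟩

/-- For an infinite `A` and a clone `𝒜` containing some ideal clone, the family
`J = { B : B ⊆ f[A^n] for some f ∈ 𝒜 }` either contains `X`, or is an ideal in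
our sense containing `A` with `𝒜 ⊆ C_J`. -/
theorem stmt9 {X : Type} [Countable X] [Infinite X]
    {A : Set X} (hA : A.Infinite)
    {𝒜 : Set (Ops X)} (h𝒜 : IsClone 𝒜)
    {I : Set (Set X)} (hI : IsIdealInOurSense I) (hsub : idealClone I ⊆ 𝒜) :
    (Set.univ : Set X) ∈ {B : Set X | ∃ f ∈ 𝒜, B ⊆ opImage f A} ∨
    (IsIdealInOurSense {B : Set X | ∃ f ∈ 𝒜, B ⊆ opImage f A} ∧
      A ∈ {B : Set X | ∃ f ∈ 𝒜, B ⊆ opImage f A} ∧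
      𝒜 ⊆ idealClone {B : Set X | ∃ f ∈ 𝒜, B ⊆ opImage f A}) :=
  stmt9_general hA h𝒜 hI hsub
end

section
/- Let I be an ideal (in our sense) on a countably infinite set X. Then C_I is precomplete if and only if for every A ∉ I there exist n ≥ 1 and a (finite or countably infinite) sequence (f_k)_{k≥1} of n-ary operations on X such that ⋃_k f_k[A^n] = X and ⋃_k f_k[B^n] ∈ I for all B ∈ I (i.e., T(A,n,p) holds for some n ≥ 1 and some 1 ≤ p ≤ ∞). -/
/-- `T(A,n,∞)` with respect to `I`: there is a (finite or countably infinite)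
sequence of `(n+1)`-ary operations whose images of `A^{n+1}` cover `X` while the
union of their images of `B^{n+1}` is in `I` for every `B ∈ I`. -/
def Tprop {X : Type} (I : Set (Set X)) (A : Set X) (n : ℕ) : Prop :=
  ∃ f : ℕ → ((Fin (n + 1) → X) → X),
    (⋃ k, f k '' {x | ∀ i, x i ∈ A}) = Set.univ ∧
    ∀ B ∈ I, (⋃ k, f k '' {x | ∀ i, x i ∈ B}) ∈ I

section Stmt12Aux
attribute [local instance] Classical.propDecidable
open Set in
lemma Stmt12.finUnion_mem {X : Type} {I : Set (Set X)} (hI : IsIdealInOurSense I) :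
    ∀ {k : ℕ} (S : Fin k → Set X), (∀ i, S i ∈ I) → (⋃ i, S i) ∈ I := by
  obtain ⟨hSub, hUn, hFin, -, -⟩ := hI
  intro k
  induction k with
  | zero =>
      intro S _
      have h : (⋃ i : Fin 0, S i) = ∅ := by simp
      rw [h]; exact hFin ∅ Set.finite_empty
  | succ k ih =>
      intro S hS
      have h : (⋃ i : Fin (k+1), S i) = S 0 ∪ ⋃ i : Fin k, S i.succ := by
        ext x; simp only [Set.mem_iUnion, Set.mem_union]
        constructor
        · rintro ⟨i, hi⟩
          rcases Fin.eq_zero_or_eq_succ i with h | ⟨j, rfl⟩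
          · left; rwa [h] at hi
          · right; exact ⟨j, hi⟩
        · rintro (h | ⟨j, hj⟩)
          exacts [⟨0, h⟩, ⟨j.succ, hj⟩]
      rw [h]
      exact hUn _ (hS 0) _ (ih _ fun i => hS i.succ)

lemma Stmt12.isClone_idealClone {X : Type} {I : Set (Set X)} (hI : IsIdealInOurSense I) :
    IsClone (idealClone I) := by
  constructor
  · intro n i A hA
    refine hI.1 A hA _ ?_
    rintro y ⟨x, hx, rfl⟩
    exact hx i
  · intro n m f g hf hg A hA
    have hG : (⋃ i : Fin (n+1), opImage ⟨m, g i⟩ A) ∈ I :=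
      Stmt12.finUnion_mem hI _ fun i => hg i A hA
    refine hI.1 _ (hf _ hG) _ ?_
    rintro y ⟨x, hx, rfl⟩
    exact ⟨fun i => g i x, fun i => Set.mem_iUnion.2 ⟨i, ⟨x, hx, rfl⟩⟩, rfl⟩

lemma Stmt12.mem_of_range_subset {X : Type} {I : Set (Set X)} (hI : IsIdealInOurSense I)
    {n : ℕ} {f : (Fin (n+1) → X) → X} {A : Set X} (hA : A ∈ I) (hr : ∀ x, f x ∈ A) :
    (⟨n, f⟩ : Ops X) ∈ idealClone I := by
  intro B hB
  refine hI.1 A hA _ ?_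
  rintro y ⟨x, hx, rfl⟩
  exact hr x

lemma Stmt12.exists_equiv_nat {X : Type} [Countable X] {A : Set X} (hA : A.Infinite) :
    Nonempty (↥A ≃ ℕ) := by
  haveI := hA.to_subtype
  obtain ⟨d⟩ := nonempty_denumerable ↥A
  exact ⟨Denumerable.eqv ↥A⟩

lemma Stmt12.infinite_of_not_mem {X : Type} {I : Set (Set X)} (hI : IsIdealInOurSense I)
    {A : Set X} (hA : A ∉ I) : A.Infinite := by
  by_contra h
  exact hA (hI.2.2.1 A (Set.not_infinite.mp h))

lemma Stmt12.idealClone_ne_univ {X : Type} [Countable X] [Infinite X]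
    {I : Set (Set X)} (hI : IsIdealInOurSense I) : idealClone I ≠ Set.univ := by
  obtain ⟨A0, hA0, hA0inf⟩ := hI.2.2.2.1
  obtain ⟨e0⟩ := Stmt12.exists_equiv_nat hA0inf
  obtain ⟨dX⟩ := nonempty_denumerable X
  let eX := Denumerable.eqv X
  intro h
  -- surjection from A0 onto X
  set s : X → X := fun x => if hx : x ∈ A0 then eX.symm (e0 ⟨x, hx⟩) else x with hs
  have hmem : (⟨0, fun x : Fin 1 → X => s (x 0)⟩ : Ops X) ∈ idealClone I := by
    rw [h]; trivial
  have himg : opImage ⟨0, fun x : Fin 1 → X => s (x 0)⟩ A0 = Set.univ := by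
    apply Set.eq_univ_of_univ_subset
    intro y _
    refine ⟨fun _ => (e0.symm (eX y) : X), fun i => (e0.symm (eX y)).2, ?_⟩
    simp only [hs]
    rw [dif_pos (e0.symm (eX y)).2]
    have : (⟨(e0.symm (eX y) : X), (e0.symm (eX y)).2⟩ : ↥A0) = e0.symm (eX y) := rfl
    rw [this, Equiv.apply_symm_apply, Equiv.symm_apply_apply]
  have := hmem A0 hA0
  rw [himg] at this
  exact hI.2.2.2.2 this
end Stmt12Aux
section Stmt12Aux2
attribute [local instance] Classical.propDecidable

lemma Stmt12.eq_univ_of_clone {X : Type} [Countable X] [Infinite X]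
    {I : Set (Set X)} (hI : IsIdealInOurSense I)
    (hT : ∀ A : Set X, A ∉ I → ∃ n : ℕ, Tprop I A n)
    {D : Set (Ops X)} (hD : IsClone D) (hCD : idealClone I ⊆ D)
    {g0 : Ops X} (hg0D : g0 ∈ D) (hg0 : g0 ∉ idealClone I) : D = Set.univ := by
  obtain ⟨n, g⟩ := g0
  have hg0' : ∃ A1 ∈ I, opImage ⟨n, g⟩ A1 ∉ I := by
    by_contra hcon
    push_neg at hcon
    exact hg0 hcon
  obtain ⟨A1, hA1, hA1n⟩ := hg0'
  obtain ⟨A0, hA0, hA0inf⟩ := hI.2.2.2.1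
  set A : Set X := A1 ∪ A0 with hAdef
  have hAmem : A ∈ I := hI.2.1 A1 hA1 A0 hA0
  have hAinf : A.Infinite := hA0inf.mono Set.subset_union_right
  have hA''n : opImage ⟨n, g⟩ A ∉ I := by
    intro hmem
    refine hA1n (hI.1 _ hmem _ ?_)
    rintro y ⟨x, hx, rfl⟩
    exact ⟨x, fun i => Set.mem_union_left _ (hx i), rfl⟩
  obtain ⟨m, fk, hcov, hIcond⟩ := hT _ hA''n
  obtain ⟨e0⟩ := Stmt12.exists_equiv_nat hAinf
  set e : ℕ → X := fun k => (e0.symm k : X) with hedef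
  have he : ∀ k, e k ∈ A := fun k => (e0.symm k).2
  set idx : X → ℕ := fun y => if h : y ∈ A then e0 ⟨y, h⟩ else 0 with hidxdef
  have hidx : ∀ k, idx (e k) = k := by
    intro k
    simp only [hidxdef, hedef]
    rw [dif_pos (e0.symm k).2]
    have h1 : (⟨((e0.symm k : ↥A) : X), (e0.symm k).2⟩ : ↥A) = e0.symm k := rfl
    rw [h1, Equiv.apply_symm_apply]
  -- Φ combines all the fk's; it lies in the ideal clone
  have hΦ : (⟨m + 1, fun z : Fin (m+1+1) → X => fk (idx (z 0)) (fun i => z i.succ)⟩ :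
      Ops X) ∈ idealClone I := by
    intro B hB
    refine hI.1 _ (hIcond B hB) _ ?_
    rintro y ⟨z, hz, rfl⟩
    exact Set.mem_iUnion.2 ⟨idx (z 0), ⟨fun i => z i.succ, fun i => hz i.succ, rfl⟩⟩
  -- choices
  have hcov' : ∀ y : X, ∃ k x, (∀ i, x i ∈ opImage ⟨n, g⟩ A) ∧ fk k x = y := by
    intro y
    have hy : y ∈ ⋃ k, fk k '' {x | ∀ i, x i ∈ opImage ⟨n, g⟩ A} := by
      rw [show (⋃ k, fk k '' {x | ∀ i, x i ∈ opImage ⟨n, g⟩ A}) = Set.univ from hcov]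
      trivial
    obtain ⟨s, ⟨k, rfl⟩, x, hx, rfl⟩ := hy
    exact ⟨k, x, hx, rfl⟩
  choose K a ha hfk using hcov'
  have ha' : ∀ (y : X) (i : Fin (m+1)), ∃ cc : Fin (n+1) → X,
      (∀ j, cc j ∈ A) ∧ g cc = a y i := fun y i => ha y i
  choose c hc hgc using ha'
  apply Set.eq_univ_of_forall
  rintro ⟨r, h⟩
  have ht : (⟨r, fun x : Fin (r+1) → X => e (K (h x))⟩ : Ops X) ∈ D :=
    hCD (Stmt12.mem_of_range_subset hI hAmem fun x => he _)
  have hw : ∀ (i : Fin (m+1)) (j : Fin (n+1)),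
      (⟨r, fun x : Fin (r+1) → X => c (h x) i j⟩ : Ops X) ∈ D :=
    fun i j => hCD (Stmt12.mem_of_range_subset hI hAmem fun x => hc _ i j)
  have hG : ∀ i : Fin (m+1),
      (⟨r, fun x : Fin (r+1) → X => g fun j => c (h x) i j⟩ : Ops X) ∈ D :=
    fun i => hD.2 n r g (fun j x => c (h x) i j) hg0D (fun j => hw i j)
  have hv : ∀ i : Fin (m+1+1),
      (⟨r, Fin.cases (fun x : Fin (r+1) → X => e (K (h x)))
        (fun (i : Fin (m+1)) (x : Fin (r+1) → X) => g fun j => c (h x) i j) i⟩ : Ops X) ∈ D := by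
    intro i
    induction i using Fin.cases with
    | zero => simpa using ht
    | succ i => simpa using hG i
  have hfinal := hD.2 (m+1) r
      (fun z : Fin (m+1+1) → X => fk (idx (z 0)) (fun i => z i.succ))
      (fun i => Fin.cases (fun x : Fin (r+1) → X => e (K (h x)))
        (fun (i : Fin (m+1)) (x : Fin (r+1) → X) => g fun j => c (h x) i j) i)
      (hCD hΦ) hv
  have heq : (fun x : Fin (r+1) → X =>
      (fun z : Fin (m+1+1) → X => fk (idx (z 0)) (fun i => z i.succ))
        (fun i => Fin.cases (fun x : Fin (r+1) → X => e (K (h x)))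
          (fun (i : Fin (m+1)) (x : Fin (r+1) → X) => g fun j => c (h x) i j) i x)) = h := by
    funext x
    simp only [Fin.cases_zero, Fin.cases_succ]
    rw [hidx]
    have h2 : (fun i : Fin (m+1) => g fun j => c (h x) i j) = a (h x) :=
      funext fun i => hgc (h x) i
    rw [h2, hfk]
  rw [heq] at hfinal
  exact hfinal
end Stmt12Aux2
section Stmt12Aux3
attribute [local instance] Classical.propDecidable

/-- `Y` is covered by countably many images of `A`-powers under `(n+1)`-ary
operations that collectively behave like members of `C_I`. -/
def Stmt12.SmallAt {X : Type} (I : Set (Set X)) (A : Set X) (Y : Set X) (n : ℕ) : Prop :=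
  ∃ f : ℕ → ((Fin (n + 1) → X) → X),
    (∀ B ∈ I, (⋃ k, f k '' {x | ∀ i, x i ∈ B}) ∈ I) ∧
    Y ⊆ ⋃ k, f k '' {x | ∀ i, x i ∈ A}

/-- `Y` is small with respect to `I` and `A`. -/
def Stmt12.SmallS {X : Type} (I : Set (Set X)) (A : Set X) (Y : Set X) : Prop :=
  ∃ n : ℕ, Stmt12.SmallAt I A Y n

namespace Stmt12

variable {X : Type}

lemma SmallS.mono {I : Set (Set X)} {A Y Y' : Set X} (h : SmallS I A Y) (hsub : Y' ⊆ Y) :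
    SmallS I A Y' := by
  obtain ⟨n, f, h1, h2⟩ := h
  exact ⟨n, f, h1, hsub.trans h2⟩

lemma smallS_self {I : Set (Set X)} (hI : IsIdealInOurSense I) (A : Set X) :
    SmallS I A A := by
  refine ⟨0, fun _ x => x 0, ?_, ?_⟩
  · intro B hB
    refine hI.1 B hB _ ?_
    rintro y ⟨-, ⟨k, rfl⟩, x, hx, rfl⟩
    exact hx 0
  · intro y hy
    exact Set.mem_iUnion.2 ⟨0, ⟨fun _ => y, fun _ => hy, rfl⟩⟩

lemma smallS_of_mem {I : Set (Set X)} [Countable X] (hI : IsIdealInOurSense I)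
    {A : Set X} (hA : A.Nonempty) {B : Set X} (hB : B ∈ I) : SmallS I A B := by
  rcases B.eq_empty_or_nonempty with rfl | hBne
  · exact (smallS_self hI A).mono (Set.empty_subset A)
  obtain ⟨e, he⟩ := (Set.to_countable B).exists_eq_range hBne
  refine ⟨0, fun k _ => e k, ?_, ?_⟩
  · intro B' hB'
    refine hI.1 B hB _ ?_
    rintro y ⟨-, ⟨k, rfl⟩, x, hx, rfl⟩
    rw [he]; exact ⟨k, rfl⟩
  · intro b hb
    rw [he] at hb
    obtain ⟨k, rfl⟩ := hb
    exact Set.mem_iUnion.2 ⟨k, ⟨fun _ => hA.choose, fun _ => hA.choose_spec, rfl⟩⟩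

/-- Padding a family of operations to a higher arity. -/
lemma SmallAt.pad {I : Set (Set X)} {A Y : Set X} (hI : IsIdealInOurSense I)
    (hA : A.Nonempty) {n N : ℕ} (h : SmallAt I A Y n) (hle : n ≤ N) :
    SmallAt I A Y N := by
  obtain ⟨f, h1, h2⟩ := h
  have hle' : n + 1 ≤ N + 1 := by omega
  refine ⟨fun k x => f k (fun i => x (Fin.castLE hle' i)), ?_, ?_⟩
  · intro B hB
    refine hI.1 _ (h1 B hB) _ ?_
    rintro y ⟨-, ⟨k, rfl⟩, x, hx, rfl⟩
    exact Set.mem_iUnion.2 ⟨k, ⟨fun i => x (Fin.castLE hle' i), fun i => hx _, rfl⟩⟩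
  · intro y hy
    obtain ⟨-, ⟨k, rfl⟩, b, hb, rfl⟩ := h2 hy
    refine Set.mem_iUnion.2 ⟨k,
      ⟨fun i => if hi : (i : ℕ) < n + 1 then b ⟨i, hi⟩ else hA.choose, fun i => ?_, ?_⟩⟩
    · by_cases hi : (i : ℕ) < n + 1
      · dsimp only; rw [dif_pos hi]; exact hb _
      · dsimp only; rw [dif_neg hi]; exact hA.choose_spec
    · show f k _ = f k b
      congr 1
      funext i
      have hi : ((Fin.castLE hle' i : Fin (N + 1)) : ℕ) < n + 1 := i.isLt
      dsimp only
      rw [dif_pos hi]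
      exact congrArg b (Fin.ext rfl)

lemma SmallS.union {I : Set (Set X)} {A Y1 Y2 : Set X} (hI : IsIdealInOurSense I)
    (hA : A.Nonempty) (h1 : SmallS I A Y1) (h2 : SmallS I A Y2) :
    SmallS I A (Y1 ∪ Y2) := by
  obtain ⟨n1, h1⟩ := h1
  obtain ⟨n2, h2⟩ := h2
  set N := max n1 n2 with hN
  obtain ⟨f, hf1, hf2⟩ := h1.pad hI hA (show n1 ≤ N from le_max_left n1 n2)
  obtain ⟨g, hg1, hg2⟩ := h2.pad hI hA (show n2 ≤ N from le_max_right n1 n2)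
  set h : ℕ → ((Fin (N + 1) → X) → X) :=
    fun k => if k % 2 = 0 then f (k / 2) else g (k / 2) with hhdef
  have hsub : ∀ S : Set X,
      (⋃ k, h k '' {x | ∀ i, x i ∈ S}) ⊆
        (⋃ k, f k '' {x | ∀ i, x i ∈ S}) ∪ ⋃ k, g k '' {x | ∀ i, x i ∈ S} := by
    intro S y hy
    obtain ⟨-, ⟨k, rfl⟩, x, hx, rfl⟩ := hy
    by_cases hk : k % 2 = 0
    · left
      refine Set.mem_iUnion.2 ⟨k / 2, ⟨x, hx, ?_⟩⟩
      simp only [hhdef, if_pos hk]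
    · right
      refine Set.mem_iUnion.2 ⟨k / 2, ⟨x, hx, ?_⟩⟩
      simp only [hhdef, if_neg hk]
  have hsupf : ∀ S : Set X,
      (⋃ k, f k '' {x | ∀ i, x i ∈ S}) ⊆ ⋃ k, h k '' {x | ∀ i, x i ∈ S} := by
    intro S y hy
    obtain ⟨-, ⟨k, rfl⟩, x, hx, rfl⟩ := hy
    refine Set.mem_iUnion.2 ⟨2 * k, ⟨x, hx, ?_⟩⟩
    have e1 : (2 * k) % 2 = 0 := by omega
    have e2 : (2 * k) / 2 = k := by omega
    simp only [hhdef, if_pos e1, e2]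
  have hsupg : ∀ S : Set X,
      (⋃ k, g k '' {x | ∀ i, x i ∈ S}) ⊆ ⋃ k, h k '' {x | ∀ i, x i ∈ S} := by
    intro S y hy
    obtain ⟨-, ⟨k, rfl⟩, x, hx, rfl⟩ := hy
    refine Set.mem_iUnion.2 ⟨2 * k + 1, ⟨x, hx, ?_⟩⟩
    have e1 : ¬ (2 * k + 1) % 2 = 0 := by omega
    have e2 : (2 * k + 1) / 2 = k := by omega
    simp only [hhdef, if_neg e1, e2]
  refine ⟨N, h, ?_, ?_⟩
  · intro B hB
    exact hI.1 _ (hI.2.1 _ (hf1 B hB) _ (hg1 B hB)) _ (hsub B)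
  · intro y hy
    rcases hy with hy | hy
    · exact hsupf A (hf2 hy)
    · exact hsupg A (hg2 hy)

lemma smallS_iUnion_fin {I : Set (Set X)} {A : Set X} (hI : IsIdealInOurSense I)
    (hA : A.Nonempty) :
    ∀ {k : ℕ} (S : Fin k → Set X), (∀ i, SmallS I A (S i)) → SmallS I A (⋃ i, S i) := by
  intro k
  induction k with
  | zero =>
      intro S _
      have h : (⋃ i : Fin 0, S i) = ∅ := by simp
      rw [h]
      exact (smallS_self hI A).mono (Set.empty_subset A)
  | succ k ih =>
      intro S hS
      have h : (⋃ i : Fin (k+1), S i) = S 0 ∪ ⋃ i : Fin k, S i.succ := by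
        ext x; simp only [Set.mem_iUnion, Set.mem_union]
        constructor
        · rintro ⟨i, hi⟩
          rcases Fin.eq_zero_or_eq_succ i with h | ⟨j, rfl⟩
          · left; rwa [h] at hi
          · right; exact ⟨j, hi⟩
        · rintro (h | ⟨j, hj⟩)
          exacts [⟨0, h⟩, ⟨j.succ, hj⟩]
      rw [h]
      exact (hS 0).union hI hA (ih _ fun i => hS i.succ)

end Stmt12
end Stmt12Aux3
section Stmt12Aux4
attribute [local instance] Classical.propDecidable

namespace Stmt12

variable {X : Type}

lemma smallS_image [Countable X] {I : Set (Set X)} {A : Set X}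
    (hI : IsIdealInOurSense I) (hA : A.Nonempty) {m : ℕ} {f : (Fin (m + 1) → X) → X}
    (hf : (⟨m, f⟩ : Ops X) ∈ idealClone I) {Y : Set X} (hY : SmallS I A Y) :
    SmallS I A (opImage ⟨m, f⟩ Y) := by
  obtain ⟨n, gk, hg1, hg2⟩ := hY
  haveI : Infinite (Fin (m + 1) → ℕ) :=
    Infinite.of_injective (fun a _ => a) (fun a b hab => congrFun hab 0)
  obtain ⟨d⟩ := nonempty_denumerable (Fin (m + 1) → ℕ)
  set σ : ℕ → (Fin (m + 1) → ℕ) := fun k => (Denumerable.eqv (Fin (m + 1) → ℕ)).symm k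
    with hσdef
  have hσ : Function.Surjective σ := fun y =>
    ⟨Denumerable.eqv (Fin (m + 1) → ℕ) y, by simp [hσdef]⟩
  have hNe : (m + 1) * (n + 1) = (m * n + m + n) + 1 := by ring
  set N := m * n + m + n with hNdef
  set E : Fin (m + 1) × Fin (n + 1) ≃ Fin (N + 1) := finProdFinEquiv.trans (finCongr hNe)
    with hEdef
  refine ⟨N, fun k x => f (fun i => gk (σ k i) (fun j => x (E (i, j)))), ?_, ?_⟩
  · intro B hB
    refine hI.1 _ (hf _ (hg1 B hB)) _ ?_
    rintro y ⟨-, ⟨k, rfl⟩, x, hx, rfl⟩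
    exact ⟨fun i => gk (σ k i) (fun j => x (E (i, j))),
      fun i => Set.mem_iUnion.2 ⟨σ k i, ⟨fun j => x (E (i, j)), fun j => hx _, rfl⟩⟩, rfl⟩
  · rintro y ⟨b, hb, rfl⟩
    have hbi : ∀ i : Fin (m + 1), ∃ k, ∃ aa : Fin (n + 1) → X,
        (∀ j, aa j ∈ A) ∧ gk k aa = b i := by
      intro i
      obtain ⟨-, ⟨k, rfl⟩, aa, haa, h⟩ := hg2 (hb i)
      exact ⟨k, aa, haa, h⟩
    choose κ aa haa hgaa using hbi
    obtain ⟨k, hk⟩ := hσ κ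
    refine Set.mem_iUnion.2 ⟨k,
      ⟨fun p => aa (E.symm p).1 (E.symm p).2, fun p => haa _ _, ?_⟩⟩
    show f _ = f b
    congr 1
    funext i
    dsimp only
    have h2 : (fun j : Fin (n + 1) => aa (E.symm (E (i, j))).1 (E.symm (E (i, j))).2)
        = aa i := by
      funext j
      rw [E.symm_apply_apply]
    rw [h2, congrFun hk i, hgaa i]

/-- The intermediate clone used in the forward direction. -/
def cloneD (I : Set (Set X)) (A : Set X) : Set (Ops X) :=
  {f | ∀ Y : Set X, SmallS I A Y → SmallS I A (opImage f Y)}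

lemma isClone_cloneD {I : Set (Set X)} {A : Set X} (hI : IsIdealInOurSense I)
    (hA : A.Nonempty) : IsClone (cloneD I A) := by
  constructor
  · intro n i Y hY
    refine hY.mono ?_
    rintro y ⟨x, hx, rfl⟩
    exact hx i
  · intro n m f g hf hg Y hY
    have hU : SmallS I A (⋃ i : Fin (n + 1), opImage ⟨m, g i⟩ Y) :=
      smallS_iUnion_fin hI hA _ (fun i => hg i Y hY)
    refine (hf _ hU).mono ?_
    rintro y ⟨x, hx, rfl⟩
    exact ⟨fun i => g i x, fun i => Set.mem_iUnion.2 ⟨i, ⟨x, hx, rfl⟩⟩, rfl⟩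

lemma idealClone_subset_cloneD [Countable X] {I : Set (Set X)} {A : Set X}
    (hI : IsIdealInOurSense I) (hA : A.Nonempty) : idealClone I ⊆ cloneD I A := by
  rintro ⟨m, f⟩ hf Y hY
  exact smallS_image hI hA hf hY

end Stmt12
end Stmt12Aux4
section Stmt12Main
attribute [local instance] Classical.propDecidable

/-- `C_I` is precomplete iff for each `A ∉ I` the condition `T(A,n,p)` holds for
some arity `n ≥ 1` and some `1 ≤ p ≤ ∞`. -/
theorem stmt12 {X : Type} [Countable X] [Infinite X]
    {I : Set (Set X)} (hI : IsIdealInOurSense I) :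
    IsPrecompleteClone (idealClone I) ↔ ∀ A : Set X, A ∉ I → ∃ n : ℕ, Tprop I A n := by
  constructor
  · -- forward direction
    intro hPre A hA
    by_contra hno
    push_neg at hno
    have hAinf : A.Infinite := Stmt12.infinite_of_not_mem hI hA
    have hAne : A.Nonempty := hAinf.nonempty
    obtain ⟨A0, hA0, hA0inf⟩ := hI.2.2.2.1
    obtain ⟨e0⟩ := Stmt12.exists_equiv_nat hA0inf
    obtain ⟨eA⟩ := Stmt12.exists_equiv_nat hAinf
    obtain ⟨dX⟩ := nonempty_denumerable X
    set eX : X ≃ ℕ := Denumerable.eqv X with heXdef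
    -- a map sending `A0` onto `A`, with range inside `A`
    set s : X → X :=
      fun x => if hx : x ∈ A0 then (eA.symm (e0 ⟨x, hx⟩) : X) else hAne.choose with hsdef
    have hsA : ∀ x, s x ∈ A := by
      intro x
      by_cases hx : x ∈ A0
      · simp only [hsdef]; rw [dif_pos hx]; exact (eA.symm (e0 ⟨x, hx⟩)).2
      · simp only [hsdef]; rw [dif_neg hx]; exact hAne.choose_spec
    have hsur : A ⊆ s '' A0 := by
      intro a ha
      refine ⟨(e0.symm (eA ⟨a, ha⟩) : X), (e0.symm (eA ⟨a, ha⟩)).2, ?_⟩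
      simp only [hsdef]
      rw [dif_pos (e0.symm (eA ⟨a, ha⟩)).2]
      have h1 : (⟨((e0.symm (eA ⟨a, ha⟩) : ↥A0) : X), (e0.symm (eA ⟨a, ha⟩)).2⟩ : ↥A0)
          = e0.symm (eA ⟨a, ha⟩) := rfl
      rw [h1, Equiv.apply_symm_apply, Equiv.symm_apply_apply]
    have hF1D : (⟨0, fun x : Fin 1 → X => s (x 0)⟩ : Ops X) ∈ Stmt12.cloneD I A := by
      intro Y hY
      refine (Stmt12.smallS_self hI A).mono ?_
      rintro y ⟨x, hx, rfl⟩
      exact hsA _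
    have hF1C : (⟨0, fun x : Fin 1 → X => s (x 0)⟩ : Ops X) ∉ idealClone I := by
      intro hmem
      refine hA (hI.1 _ (hmem A0 hA0) A ?_)
      intro a ha
      obtain ⟨x0, hx0, hsx⟩ := hsur ha
      exact ⟨fun _ => x0, fun i => hx0, hsx⟩
    have hssub : idealClone I ⊂ Stmt12.cloneD I A :=
      ⟨Stmt12.idealClone_subset_cloneD hI hAne,
        fun hba => hF1C (hba hF1D)⟩
    have hDuniv : Stmt12.cloneD I A = Set.univ :=
      hPre.2.2 _ (Stmt12.isClone_cloneD hI hAne) hssub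
    -- a map sending `A` onto all of `X`
    set t : X → X := fun x => if hx : x ∈ A then eX.symm (eA ⟨x, hx⟩) else x with htdef
    have hF2D : (⟨0, fun x : Fin 1 → X => t (x 0)⟩ : Ops X) ∈ Stmt12.cloneD I A := by
      rw [hDuniv]; trivial
    have hsm : Stmt12.SmallS I A
        (opImage ⟨0, fun x : Fin 1 → X => t (x 0)⟩ A) :=
      hF2D A (Stmt12.smallS_self hI A)
    have huniv : Stmt12.SmallS I A Set.univ := by
      refine hsm.mono ?_
      intro y _
      refine ⟨fun _ => (eA.symm (eX y) : X), fun i => (eA.symm (eX y)).2, ?_⟩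
      simp only [htdef]
      rw [dif_pos (eA.symm (eX y)).2]
      have h1 : (⟨((eA.symm (eX y) : ↥A) : X), (eA.symm (eX y)).2⟩ : ↥A)
          = eA.symm (eX y) := rfl
      rw [h1, Equiv.apply_symm_apply, Equiv.symm_apply_apply]
    obtain ⟨n, f, h1, h2⟩ := huniv
    exact hno n ⟨f, Set.eq_univ_of_univ_subset h2, h1⟩
  · -- backward direction
    intro hT
    refine ⟨Stmt12.isClone_idealClone hI, Stmt12.idealClone_ne_univ hI, ?_⟩
    intro D hD hlt
    obtain ⟨g0, hg0D, hg0⟩ := Set.not_subset.1 hlt.2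
    exact Stmt12.eq_univ_of_clone hI hT hD hlt.1 hg0D hg0
end Stmt12Main
end

section
/- Let I be an ideal (in our sense) on a countably infinite set X, let A ⊆ X be infinite, and let n ≥ 1. Then T(A,n,∞) holds if and only if there exist functions g_1, …, g_n : X → A such that ⋂_{i=1}^n g_i⁻¹[B] ∈ I for all B ∈ I (equivalently, the vector function ḡ = (g_1,…,g_n) : X → A^n satisfies ḡ⁻¹[B^n] ∈ I for all B ∈ I). -/
/-- `T(A,n,∞)` holds iff there is a vector function `ḡ : X → A^n` with
`ḡ⁻¹[B^n] ∈ I` for all `B ∈ I`. -/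
theorem stmt13 {X : Type} [Countable X] [Infinite X]
    {I : Set (Set X)} (hI : IsIdealInOurSense I)
    {A : Set X} (hA : A.Infinite) (n : ℕ) :
    Tprop I A n ↔ ∃ g : Fin (n + 1) → X → X,
      (∀ i x, g i x ∈ A) ∧ ∀ B ∈ I, {x : X | ∀ i, g i x ∈ B} ∈ I := by
  classical
  obtain ⟨hdown, hunion, hfin, hex, huniv⟩ := hI
  constructor
  · rintro ⟨f, hcov, hsmall⟩
    have hx : ∀ x : X, ∃ k : ℕ, ∃ a : Fin (n + 1) → X, (∀ i, a i ∈ A) ∧ f k a = x := by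
      intro x
      have hmem : x ∈ ⋃ k, f k '' {x | ∀ i, x i ∈ A} := hcov ▸ Set.mem_univ x
      obtain ⟨k, a, ha, hfa⟩ := Set.mem_iUnion.1 hmem
      exact ⟨k, a, ha, hfa⟩
    choose k a ha hfa using hx
    refine ⟨fun i x => a x i, fun i x => ha x i, ?_⟩
    intro B hB
    refine hdown _ (hsmall B hB) _ ?_
    intro x hx
    exact Set.mem_iUnion.2 ⟨k x, ⟨a x, hx, hfa x⟩⟩
  · rintro ⟨g, hgA, hgI⟩
    obtain ⟨e, he⟩ := exists_surjective_nat X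
    refine ⟨fun k x => if ∀ i, x i = g i (e k) then e k else x 0, ?_, ?_⟩
    · apply Set.eq_univ_of_forall
      intro x
      obtain ⟨k, rfl⟩ := he x
      refine Set.mem_iUnion.2 ⟨k, ⟨fun i => g i (e k), fun i => hgA i (e k), ?_⟩⟩
      simp
    · intro B hB
      refine hdown _ (hunion _ (hgI B hB) _ hB) _ ?_
      intro y hy
      obtain ⟨k, x, hxB, hfx⟩ := Set.mem_iUnion.1 hy
      by_cases h : ∀ i, x i = g i (e k)
      · simp only [if_pos h] at hfx
        subst hfx
        exact Set.mem_union_left _ (fun i => (h i) ▸ hxB i)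
      · simp only [if_neg h] at hfx
        exact Set.mem_union_right _ (hfx ▸ hxB 0)
end
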